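/- arXiv:0705.4077 — 6 statements merged into one kernel-verified Lean document; each statement's English description precedes it below -/
import Mathlib

section
/- Let A1 and A2 be nonnegative (positive semidefinite) Hermitian operators on a finite-dimensional Hilbert space, with null spaces L1 and L2 respectively satisfying L1 ∩ L2 = {0}. Suppose every nonzero eigenvalue of A1 and of A2 is at least v > 0. Then A1 + A2 ≥ 2 v sin²(θ/2) as operators, where θ = θ(L1, L2) is the angle between L1 and L2, defined by cos θ = max{|⟨x,y⟩| : x ∈ L1, y ∈ L2, ‖x‖ = ‖y‖ = 1}. -/
open Matrix
open scoped ComplexOrder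

namespace KitaevAux

noncomputable def snorm {N : ℕ} (y : Fin N → ℂ) : ℝ := ∑ i, Complex.normSq (y i)

lemma snorm_nonneg {N : ℕ} (y : Fin N → ℂ) : 0 ≤ snorm y :=
  Finset.sum_nonneg fun i _ => Complex.normSq_nonneg _

lemma dot_self_eq {N : ℕ} (y : Fin N → ℂ) : star y ⬝ᵥ y = ((snorm y : ℝ) : ℂ) := by
  simp only [dotProduct, snorm, Pi.star_apply, Complex.ofReal_sum]
  refine Finset.sum_congr rfl fun i _ => ?_
  rw [Complex.normSq_eq_conj_mul_self]
  rfl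

lemma eq_zero_of_snorm_eq_zero {N : ℕ} {y : Fin N → ℂ} (h : snorm y = 0) : y = 0 := by
  have h2 : star y ⬝ᵥ y = 0 := by rw [dot_self_eq, h]; simp
  exact dotProduct_star_self_eq_zero.mp h2

lemma snorm_smul_real {N : ℕ} (r : ℝ) (y : Fin N → ℂ) :
    snorm (((r : ℂ)) • y) = r ^ 2 * snorm y := by
  simp only [snorm, Pi.smul_apply, smul_eq_mul, Complex.normSq_mul, Complex.normSq_ofReal,
    Finset.mul_sum]
  exact Finset.sum_congr rfl fun i _ => by ring

lemma norm_eq_sqrt_snorm {N : ℕ} (y : Fin N → ℂ) :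
    ‖(WithLp.equiv 2 (Fin N → ℂ)).symm y‖ = Real.sqrt (snorm y) := by
  rw [EuclideanSpace.norm_eq]
  congr 1
  refine Finset.sum_congr rfl fun i _ => ?_
  rw [Complex.sq_norm]
  rfl

lemma cs {N : ℕ} (y z : Fin N → ℂ) :
    ‖star y ⬝ᵥ z‖ ≤ Real.sqrt (snorm y) * Real.sqrt (snorm z) := by
  have h := norm_inner_le_norm (𝕜 := ℂ) ((WithLp.equiv 2 (Fin N → ℂ)).symm y)
    ((WithLp.equiv 2 (Fin N → ℂ)).symm z)
  rw [EuclideanSpace.inner_eq_star_dotProduct, dotProduct_comm, norm_eq_sqrt_snorm, norm_eq_sqrt_snorm] at h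
  exact h

lemma dotProduct_sumv {N M : ℕ} (w : Fin N → ℂ) (s : Finset (Fin M)) (f : Fin M → (Fin N → ℂ)) :
    w ⬝ᵥ (∑ i ∈ s, f i) = ∑ i ∈ s, w ⬝ᵥ f i := by
  simp only [dotProduct, Finset.sum_apply, Finset.mul_sum]
  exact Finset.sum_comm

lemma sumv_dotProduct {N M : ℕ} (w : Fin N → ℂ) (s : Finset (Fin M)) (f : Fin M → (Fin N → ℂ)) :
    (∑ i ∈ s, f i) ⬝ᵥ w = ∑ i ∈ s, f i ⬝ᵥ w := by
  simp only [dotProduct, Finset.sum_apply, Finset.sum_mul]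
  exact Finset.sum_comm

lemma mulVec_finsum {N M : ℕ} (A : Matrix (Fin N) (Fin N) ℂ) (s : Finset (Fin M))
    (f : Fin M → (Fin N → ℂ)) : A.mulVec (∑ i ∈ s, f i) = ∑ i ∈ s, A.mulVec (f i) := by
  simpa only [Matrix.mulVecLin_apply] using map_sum A.mulVecLin f s

/-- Key spectral lemma: a PSD matrix with all nonzero eigenvalues `≥ v` satisfies
`⟨x, A x⟩ ≥ v (‖x‖² - ‖u‖²)` where `u` is the projection of `x` to the kernel. -/
lemma key_spectral {N : ℕ} {A : Matrix (Fin N) (Fin N) ℂ} (hA : A.IsHermitian)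
    (v : ℝ)
    (hev : ∀ (μ : ℝ) (x : Fin N → ℂ), x ≠ 0 → A.mulVec x = (μ : ℂ) • x → μ ≠ 0 → v ≤ μ)
    (x : Fin N → ℂ) :
    ∃ u : Fin N → ℂ, A.mulVec u = 0 ∧ star u ⬝ᵥ x = star u ⬝ᵥ u ∧
      v * (snorm x - snorm u) ≤ (star x ⬝ᵥ A.mulVec x).re := by
  classical
  set e : Fin N → (Fin N → ℂ) := fun i => ⇑(hA.eigenvectorBasis i) with he
  set lam : Fin N → ℝ := hA.eigenvalues with hlam
  have horth : ∀ i j, star (e i) ⬝ᵥ (e j) = if i = j then 1 else 0 := by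
    intro i j
    have h := hA.eigenvectorBasis.orthonormal
    rw [orthonormal_iff_ite] at h
    rw [dotProduct_comm]; exact h i j
  have hene : ∀ i, e i ≠ 0 := by
    intro i hzero
    have h := hA.eigenvectorBasis.orthonormal.ne_zero i
    exact h (by ext j; exact congrFun hzero j)
  set c : Fin N → ℂ := fun i => star (e i) ⬝ᵥ x with hc
  have hx : x = ∑ i, c i • e i := by
    have h := congrArg WithLp.ofLp (hA.eigenvectorBasis.sum_repr' (WithLp.toLp 2 x))
    simp only [WithLp.ofLp_sum, WithLp.ofLp_smul, EuclideanSpace.inner_eq_star_dotProduct,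
      dotProduct_comm x] at h
    exact h.symm
  have hAe : ∀ i, A.mulVec (e i) = ((lam i : ℂ)) • e i := by
    intro i
    have h2 := hA.mulVec_eigenvectorBasis i
    funext j
    have h3 := congrFun h2 j
    simp only [Pi.smul_apply] at h3 ⊢
    rw [h3, Complex.real_smul, smul_eq_mul]
  have hlb : ∀ i, lam i ≠ 0 → v ≤ lam i := fun i hi => hev (lam i) (e i) (hene i) (hAe i) hi
  set S : Finset (Fin N) := Finset.univ.filter (fun i => lam i = 0) with hS
  set u : Fin N → ℂ := ∑ i ∈ S, c i • e i with hu
  -- generic expansion of star (∑_{i∈T} c i • e i) ⬝ᵥ y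
  have hud : ∀ (T : Finset (Fin N)) (y : Fin N → ℂ),
      star (∑ i ∈ T, c i • e i) ⬝ᵥ y = ∑ i ∈ T, (starRingEnd ℂ) (c i) * (star (e i) ⬝ᵥ y) := by
    intro T y
    rw [star_sum, sumv_dotProduct]
    refine Finset.sum_congr rfl fun i _ => ?_
    rw [star_smul, smul_dotProduct]
    rfl
  -- self dot products over an index set
  have hTT : ∀ T : Finset (Fin N),
      star (∑ i ∈ T, c i • e i) ⬝ᵥ (∑ i ∈ T, c i • e i)
        = ∑ i ∈ T, (starRingEnd ℂ) (c i) * c i := by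
    intro T
    rw [hud]
    refine Finset.sum_congr rfl fun i hi => ?_
    congr 1
    rw [dotProduct_sumv, Finset.sum_eq_single i]
    · rw [dotProduct_smul, horth i i, if_pos rfl, smul_eq_mul, mul_one]
    · intro j hj hji
      rw [dotProduct_smul, horth i j, if_neg (fun h => hji h.symm), smul_eq_mul, mul_zero]
    · intro hi'; exact absurd hi hi'
  have hcc : ∀ z : ℂ, (starRingEnd ℂ) z * z = ((Complex.normSq z : ℝ) : ℂ) := by
    intro z
    rw [Complex.normSq_eq_conj_mul_self]
  -- snorms
  have hsu : snorm u = ∑ i ∈ S, Complex.normSq (c i) := by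
    have h0 := hTT S
    rw [← hu, dot_self_eq] at h0
    have : ((snorm u : ℝ) : ℂ) = ((∑ i ∈ S, Complex.normSq (c i) : ℝ) : ℂ) := by
      rw [h0, Complex.ofReal_sum]
      exact Finset.sum_congr rfl fun i _ => hcc (c i)
    exact_mod_cast this
  have hsx : snorm x = ∑ i, Complex.normSq (c i) := by
    have h0 := hTT Finset.univ
    rw [← hx, dot_self_eq] at h0
    have : ((snorm x : ℝ) : ℂ) = ((∑ i, Complex.normSq (c i) : ℝ) : ℂ) := by
      rw [h0, Complex.ofReal_sum]
      exact Finset.sum_congr rfl fun i _ => hcc (c i)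
    exact_mod_cast this
  refine ⟨u, ?_, ?_, ?_⟩
  · rw [hu, mulVec_finsum]
    refine Finset.sum_eq_zero fun i hi => ?_
    have hz : lam i = 0 := by simpa [hS] using hi
    rw [mulVec_smul, hAe i, hz]
    simp
  · rw [hu, hud, hTT]
  · -- quadratic form expansion
    have hq : star x ⬝ᵥ A.mulVec x = ∑ i, ((lam i * Complex.normSq (c i) : ℝ) : ℂ) := by
      conv_lhs => rw [hx, mulVec_finsum]
      have : ∀ i : Fin N, A.mulVec (c i • e i) = (c i * (lam i : ℂ)) • e i := by
        intro i
        rw [mulVec_smul, hAe i, smul_smul]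
      simp only [this]
      rw [hud Finset.univ]
      · refine Finset.sum_congr rfl fun i _ => ?_
        rw [dotProduct_sumv, Finset.sum_eq_single i]
        · rw [dotProduct_smul, horth i i, if_pos rfl, smul_eq_mul, mul_one,
            Complex.ofReal_mul, ← hcc (c i)]
          ring
        · intro j hj hji
          rw [dotProduct_smul, horth i j, if_neg (fun h => hji h.symm), smul_eq_mul, mul_zero]
        · intro hi'; exact absurd (Finset.mem_univ i) hi'
    have hqre : (star x ⬝ᵥ A.mulVec x).re = ∑ i, lam i * Complex.normSq (c i) := by
      rw [hq, ← Complex.ofReal_sum, Complex.ofReal_re]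
    rw [hqre, hsx, hsu]
    have hsplit : ∑ i, lam i * Complex.normSq (c i)
        = ∑ i ∈ S, lam i * Complex.normSq (c i) + ∑ i ∈ Sᶜ, lam i * Complex.normSq (c i) :=
      (Finset.sum_add_sum_compl S _).symm
    have hsplit2 : ∑ i, Complex.normSq (c i)
        = ∑ i ∈ S, Complex.normSq (c i) + ∑ i ∈ Sᶜ, Complex.normSq (c i) :=
      (Finset.sum_add_sum_compl S _).symm
    have hzeroS : ∑ i ∈ S, lam i * Complex.normSq (c i) = 0 := by
      refine Finset.sum_eq_zero fun i hi => ?_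
      have hz : lam i = 0 := by simpa [hS] using hi
      rw [hz, zero_mul]
    have hboundSc : ∑ i ∈ Sᶜ, v * Complex.normSq (c i)
        ≤ ∑ i ∈ Sᶜ, lam i * Complex.normSq (c i) := by
      refine Finset.sum_le_sum fun i hi => ?_
      have hz : lam i ≠ 0 := by
        simp only [hS, Finset.mem_compl, Finset.mem_filter, Finset.mem_univ, true_and] at hi
        exact hi
      exact mul_le_mul_of_nonneg_right (hlb i hz) (Complex.normSq_nonneg _)
    rw [hsplit, hzeroS, zero_add, hsplit2]
    rw [add_sub_cancel_left, Finset.mul_sum]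
    exact hboundSc

end KitaevAux

open KitaevAux

set_option maxHeartbeats 1000000 in
/-- **Kitaev's geometric lemma.** If `A1`, `A2` are positive semidefinite Hermitian
operators on a finite-dimensional Hilbert space whose null spaces intersect trivially,
every nonzero eigenvalue of each is at least `v > 0`, and `θ ∈ (0, π/2]` is the angle
between the null spaces (so `cos θ` is the supremum of `|⟨x,y⟩|` over unit vectors `x`
in the null space of `A1` and `y` in the null space of `A2`), then
`A1 + A2 ≥ 2 v sin²(θ/2)` as operators. -/
theorem kitaev_geometric_lemma (N : ℕ) (A1 A2 : Matrix (Fin N) (Fin N) ℂ)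
    (h1 : A1.PosSemidef) (h2 : A2.PosSemidef)
    (hInt : ∀ x : Fin N → ℂ, A1.mulVec x = 0 → A2.mulVec x = 0 → x = 0)
    (v : ℝ) (hv : 0 < v)
    (hev1 : ∀ (μ : ℝ) (x : Fin N → ℂ), x ≠ 0 → A1.mulVec x = (μ : ℂ) • x → μ ≠ 0 → v ≤ μ)
    (hev2 : ∀ (μ : ℝ) (x : Fin N → ℂ), x ≠ 0 → A2.mulVec x = (μ : ℂ) • x → μ ≠ 0 → v ≤ μ)
    (θ : ℝ) (hθ0 : 0 < θ) (hθ2 : θ ≤ Real.pi / 2)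
    (hcos : Real.cos θ = sSup {c : ℝ |
      ∃ x y : Fin N → ℂ, A1.mulVec x = 0 ∧ A2.mulVec y = 0 ∧
        star x ⬝ᵥ x = 1 ∧ star y ⬝ᵥ y = 1 ∧ c = ‖star x ⬝ᵥ y‖}) :
    (A1 + A2 - (((2 * v * Real.sin (θ / 2) ^ 2 : ℝ) : ℂ)) • 1).PosSemidef := by
  classical
  have hcosnn : 0 ≤ Real.cos θ := Real.cos_nonneg_of_mem_Icc
    ⟨by nlinarith [Real.pi_pos], hθ2⟩
  have hcosle1 : Real.cos θ ≤ 1 := Real.cos_le_one θ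
  have hsinid : 2 * v * Real.sin (θ / 2) ^ 2 = v * (1 - Real.cos θ) := by
    have h2 : Real.sin (θ / 2) ^ 2 = (1 - Real.cos θ) / 2 := by
      rw [← sq_abs, Real.abs_sin_half, Real.sq_sqrt (by linarith)]
    rw [h2]; ring
  set Sset : Set ℝ := {c : ℝ | ∃ x y : Fin N → ℂ, A1.mulVec x = 0 ∧ A2.mulVec y = 0 ∧
        star x ⬝ᵥ x = 1 ∧ star y ⬝ᵥ y = 1 ∧ c = ‖star x ⬝ᵥ y‖} with hSset
  have hbdd : BddAbove Sset := by
    refine ⟨1, fun c hc => ?_⟩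
    obtain ⟨x, y, _, _, hx1, hy1, rfl⟩ := hc
    have hxs : snorm x = 1 := by
      have h := dot_self_eq x; rw [hx1] at h; exact_mod_cast h.symm
    have hys : snorm y = 1 := by
      have h := dot_self_eq y; rw [hy1] at h; exact_mod_cast h.symm
    have h := cs x y
    rw [hxs, hys, Real.sqrt_one, one_mul] at h
    exact h
  -- angle bound for arbitrary kernel vectors
  have gbound : ∀ u1 u2 : Fin N → ℂ, A1.mulVec u1 = 0 → A2.mulVec u2 = 0 →
      ‖star u1 ⬝ᵥ u2‖ ≤ Real.cos θ * (Real.sqrt (snorm u1) * Real.sqrt (snorm u2)) := by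
    intro u1 u2 hk1 hk2
    rcases eq_or_lt_of_le (snorm_nonneg u1) with ha | ha
    · rw [eq_zero_of_snorm_eq_zero ha.symm]
      simp only [star_zero, zero_dotProduct, norm_zero]
      positivity
    rcases eq_or_lt_of_le (snorm_nonneg u2) with hb | hb
    · rw [eq_zero_of_snorm_eq_zero hb.symm]
      simp only [dotProduct_zero, norm_zero]
      positivity
    have hsa : 0 < Real.sqrt (snorm u1) := Real.sqrt_pos.mpr ha
    have hsb : 0 < Real.sqrt (snorm u2) := Real.sqrt_pos.mpr hb
    set w1 : Fin N → ℂ := ((((Real.sqrt (snorm u1))⁻¹ : ℝ) : ℂ)) • u1 with hw1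
    set w2 : Fin N → ℂ := ((((Real.sqrt (snorm u2))⁻¹ : ℝ) : ℂ)) • u2 with hw2
    have hw1k : A1.mulVec w1 = 0 := by rw [hw1, Matrix.mulVec_smul, hk1, smul_zero]
    have hw2k : A2.mulVec w2 = 0 := by rw [hw2, Matrix.mulVec_smul, hk2, smul_zero]
    have hnorm1 : ((Real.sqrt (snorm u1))⁻¹) ^ 2 * snorm u1 = 1 := by
      rw [inv_pow, Real.sq_sqrt ha.le, inv_mul_cancel₀ ha.ne']
    have hnorm2 : ((Real.sqrt (snorm u2))⁻¹) ^ 2 * snorm u2 = 1 := by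
      rw [inv_pow, Real.sq_sqrt hb.le, inv_mul_cancel₀ hb.ne']
    have hw1n : star w1 ⬝ᵥ w1 = 1 := by
      rw [hw1, dot_self_eq, snorm_smul_real, hnorm1]; norm_num
    have hw2n : star w2 ⬝ᵥ w2 = 1 := by
      rw [hw2, dot_self_eq, snorm_smul_real, hnorm2]; norm_num
    have hmem : ‖star w1 ⬝ᵥ w2‖ ∈ Sset := ⟨w1, w2, hw1k, hw2k, hw1n, hw2n, rfl⟩
    have hle : ‖star w1 ⬝ᵥ w2‖ ≤ Real.cos θ := by
      rw [hcos]; exact le_csSup hbdd hmem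
    have hval : star w1 ⬝ᵥ w2
        = ((((Real.sqrt (snorm u1))⁻¹ * (Real.sqrt (snorm u2))⁻¹ : ℝ) : ℂ)) * (star u1 ⬝ᵥ u2) := by
      rw [hw1, hw2, star_smul, smul_dotProduct, dotProduct_smul]
      rw [smul_eq_mul, smul_eq_mul, Complex.star_def, Complex.conj_ofReal]
      push_cast
      ring
    have hnval : ‖star w1 ⬝ᵥ w2‖
        = (Real.sqrt (snorm u1))⁻¹ * (Real.sqrt (snorm u2))⁻¹ * ‖star u1 ⬝ᵥ u2‖ := by
      rw [hval, norm_mul, Complex.norm_real, Real.norm_of_nonneg (by positivity)]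
    rw [hnval] at hle
    have h3 : ‖star u1 ⬝ᵥ u2‖
        = (Real.sqrt (snorm u1) * Real.sqrt (snorm u2))
          * ((Real.sqrt (snorm u1))⁻¹ * (Real.sqrt (snorm u2))⁻¹ * ‖star u1 ⬝ᵥ u2‖) := by
      field_simp
    rw [h3]
    calc (Real.sqrt (snorm u1) * Real.sqrt (snorm u2))
          * ((Real.sqrt (snorm u1))⁻¹ * (Real.sqrt (snorm u2))⁻¹ * ‖star u1 ⬝ᵥ u2‖)
        ≤ (Real.sqrt (snorm u1) * Real.sqrt (snorm u2)) * Real.cos θ := by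
          exact mul_le_mul_of_nonneg_left hle (by positivity)
      _ = Real.cos θ * (Real.sqrt (snorm u1) * Real.sqrt (snorm u2)) := by ring
  -- Hermitian part
  have hHerm : (A1 + A2 - (((2 * v * Real.sin (θ / 2) ^ 2 : ℝ) : ℂ)) • 1).IsHermitian := by
    refine Matrix.IsHermitian.sub (h1.1.add h2.1) ?_
    unfold Matrix.IsHermitian
    rw [Matrix.conjTranspose_smul, Matrix.conjTranspose_one, Complex.star_def,
      Complex.conj_ofReal]
  refine Matrix.PosSemidef.of_dotProduct_mulVec_nonneg hHerm fun x => ?_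
  obtain ⟨u1, hk1, hproj1, hineq1⟩ := key_spectral h1.1 v hev1 x
  obtain ⟨u2, hk2, hproj2, hineq2⟩ := key_spectral h2.1 v hev2 x
  have hxx : star x ⬝ᵥ x = ((snorm x : ℝ) : ℂ) := dot_self_eq x
  have h1x : star u1 ⬝ᵥ x = ((snorm u1 : ℝ) : ℂ) := by rw [hproj1, dot_self_eq]
  have h2x : star u2 ⬝ᵥ x = ((snorm u2 : ℝ) : ℂ) := by rw [hproj2, dot_self_eq]
  have hsum : star (u1 + u2) ⬝ᵥ x = ((snorm u1 + snorm u2 : ℝ) : ℂ) := by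
    rw [star_add, add_dotProduct, h1x, h2x]; push_cast; ring
  have conjg : star u2 ⬝ᵥ u1 = (starRingEnd ℂ) (star u1 ⬝ᵥ u2) := by
    rw [Matrix.star_dotProduct]
    simp
  have hs12 : snorm (u1 + u2) = snorm u1 + snorm u2 + 2 * (star u1 ⬝ᵥ u2).re := by
    have hexp : star (u1 + u2) ⬝ᵥ (u1 + u2)
        = ((snorm u1 : ℝ) : ℂ) + ((snorm u2 : ℝ) : ℂ)
          + ((star u1 ⬝ᵥ u2) + (starRingEnd ℂ) (star u1 ⬝ᵥ u2)) := by
      rw [star_add, add_dotProduct, dotProduct_add, dotProduct_add,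
        dot_self_eq, dot_self_eq, conjg]
      ring
    have h2 := dot_self_eq (u1 + u2)
    have h3 : ((snorm (u1 + u2) : ℝ) : ℂ).re
        = (((snorm u1 : ℝ) : ℂ) + ((snorm u2 : ℝ) : ℂ)
          + ((star u1 ⬝ᵥ u2) + (starRingEnd ℂ) (star u1 ⬝ᵥ u2))).re := by
      rw [← h2, ← hexp]
    simpa [Complex.add_re, Complex.conj_re, two_mul] using h3
  have hcsr : snorm u1 + snorm u2 ≤ Real.sqrt (snorm (u1 + u2)) * Real.sqrt (snorm x) := by
    have h := cs (u1 + u2) x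
    rw [hsum, Complex.norm_real, Real.norm_eq_abs] at h
    calc snorm u1 + snorm u2 ≤ |snorm u1 + snorm u2| := le_abs_self _
      _ ≤ _ := h
  have hgb : ‖star u1 ⬝ᵥ u2‖
      ≤ Real.cos θ * (Real.sqrt (snorm u1) * Real.sqrt (snorm u2)) := gbound u1 u2 hk1 hk2
  have hgre : (star u1 ⬝ᵥ u2).re ≤ ‖star u1 ⬝ᵥ u2‖ := by
    exact Complex.re_le_norm _
  have hamgm : 2 * (Real.sqrt (snorm u1) * Real.sqrt (snorm u2)) ≤ snorm u1 + snorm u2 := by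
    nlinarith [Real.sq_sqrt (snorm_nonneg u1), Real.sq_sqrt (snorm_nonneg u2),
      sq_nonneg (Real.sqrt (snorm u1) - Real.sqrt (snorm u2)),
      Real.sqrt_nonneg (snorm u1), Real.sqrt_nonneg (snorm u2)]
  have hab_le : snorm u1 + snorm u2 ≤ (1 + Real.cos θ) * snorm x := by
    rcases eq_or_lt_of_le (add_nonneg (snorm_nonneg u1) (snorm_nonneg u2)) with h0 | h0
    · rw [← h0]; exact mul_nonneg (by linarith) (snorm_nonneg x)
    · have hsq : (snorm u1 + snorm u2) ^ 2 ≤ snorm (u1 + u2) * snorm x := by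
        nlinarith [hcsr, Real.sq_sqrt (snorm_nonneg (u1 + u2)), Real.sq_sqrt (snorm_nonneg x),
          Real.sqrt_nonneg (snorm (u1 + u2)), Real.sqrt_nonneg (snorm x)]
      have hga : 2 * (star u1 ⬝ᵥ u2).re ≤ Real.cos θ * (snorm u1 + snorm u2) := by
        have h5 : Real.cos θ * (2 * (Real.sqrt (snorm u1) * Real.sqrt (snorm u2)))
            ≤ Real.cos θ * (snorm u1 + snorm u2) :=
          mul_le_mul_of_nonneg_left hamgm hcosnn
        nlinarith [hgre, hgb]
      have hS12le : snorm (u1 + u2) ≤ (1 + Real.cos θ) * (snorm u1 + snorm u2) := by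
        rw [hs12]; linarith
      have h2 : (snorm u1 + snorm u2) ^ 2
          ≤ (1 + Real.cos θ) * (snorm u1 + snorm u2) * snorm x := by
        have h6 := mul_le_mul_of_nonneg_right hS12le (snorm_nonneg x)
        nlinarith [hsq]
      have h3 : (snorm u1 + snorm u2) * (snorm u1 + snorm u2)
          ≤ ((1 + Real.cos θ) * snorm x) * (snorm u1 + snorm u2) := by nlinarith
      exact le_of_mul_le_mul_right h3 h0
  -- assemble the quadratic form
  have hexpand : star x ⬝ᵥ (A1 + A2 - (((2 * v * Real.sin (θ / 2) ^ 2 : ℝ) : ℂ)) • 1).mulVec x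
      = star x ⬝ᵥ A1.mulVec x + star x ⬝ᵥ A2.mulVec x
        - (((2 * v * Real.sin (θ / 2) ^ 2 : ℝ) : ℂ)) * ((snorm x : ℝ) : ℂ) := by
    rw [Matrix.sub_mulVec, Matrix.add_mulVec, Matrix.smul_mulVec, Matrix.one_mulVec,
      dotProduct_sub, dotProduct_add, dotProduct_smul, smul_eq_mul, hxx]
  rw [hexpand]
  obtain ⟨hre1, him1⟩ := Complex.nonneg_iff.mp (h1.dotProduct_mulVec_nonneg x)
  obtain ⟨hre2, him2⟩ := Complex.nonneg_iff.mp (h2.dotProduct_mulVec_nonneg x)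
  rw [Complex.nonneg_iff]
  constructor
  · simp only [Complex.sub_re, Complex.add_re, Complex.mul_re, Complex.ofReal_re,
      Complex.ofReal_im, mul_zero, zero_mul, sub_zero]
    rw [hsinid]
    nlinarith [hineq1, hineq2, hab_le, hv.le, snorm_nonneg x]
  · simp only [Complex.sub_im, Complex.add_im, Complex.mul_im, Complex.ofReal_re,
      Complex.ofReal_im, mul_zero, zero_mul, add_zero, ← him1, ← him2]
    ring
end

section
/- In the deterministic transition system on configurations of the 12-state line construction, every configuration containing exactly one active site has at most one applicable forward transition rule and at most one applicable backward transition rule. -/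
/-- The twelve-state alphabet of the one-dimensional construction, with qubit
data abstracted away: `q1`/`q2` are the (two-dimensional) qubit subspaces to the
right/left of the active site, `unborn`/`dead` are the inactive one-dimensional
states, and `gate`, `rflag`, `lflag`, `turn` are the four active states
(`gate` and `rflag` being qubit states). -/
inductive LSym : Type
  | q1 | q2 | unborn | dead | gate | rflag | lflag | turn
  deriving DecidableEq

open LSym

/-- Active sites: gate marker, right-moving flag, left-moving flag, turning flag. -/
def isActive : LSym → Bool
  | gate => true
  | rflag => true
  | lflag => true
  | turn => true
  | _ => false

/-- The forward rewrite rule for a pair of adjacent sites; `b` is `true` iff a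
block boundary separates the two sites.  `none` means no rule applies to this
pair.  These are the transition rules (1)–(6) of the construction. -/
def fwdPair (b : Bool) : LSym → LSym → Option (LSym × LSym)
  | gate, q1 => if b then none else some (q2, gate)
  | gate, unborn => if b then some (q2, turn) else none
  | turn, unborn => some (lflag, unborn)
  | q2, lflag => some (lflag, q1)
  | dead, lflag => some (dead, turn)
  | turn, q1 => if b then some (dead, gate) else some (dead, rflag)
  | rflag, q1 => some (q2, rflag)
  | rflag, unborn => if b then none else some (q2, turn)
  | _, _ => none

/-- One forward transition step of the construction on a line of `n*R` sites
(blocks of size `n`): either a pair rule fires at some adjacent pair (with or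
without a block boundary between them), or the turning flag at the right end of
the chain becomes a left-moving flag, or the left-moving flag at the left end
of the chain becomes a turning flag.  All other sites are unchanged. -/
def Step (n R : ℕ) (c c' : ℕ → LSym) : Prop :=
  (∃ i : ℕ, i + 1 < n * R ∧
    fwdPair (decide ((i + 1) % n = 0)) (c i) (c (i + 1)) = some (c' i, c' (i + 1)) ∧
    ∀ j, j ≠ i → j ≠ i + 1 → c' j = c j) ∨
  (c (n * R - 1) = turn ∧ c' (n * R - 1) = lflag ∧ ∀ j, j ≠ n * R - 1 → c' j = c j) ∨
  (c 0 = lflag ∧ c' 0 = turn ∧ ∀ j, j ≠ 0 → c' j = c j)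

/-- Number of active sites of a configuration on a line of `L` sites. -/
def activeCount (L : ℕ) (c : ℕ → LSym) : ℕ :=
  ((Finset.range L).filter fun i => isActive (c i) = true).card

instance : Fintype LSym :=
  ⟨⟨[q1, q2, unborn, dead, gate, rflag, lflag, turn], by decide⟩,
   by intro x; cases x <;> decide⟩

/-- In every applicable rule, exactly one of the two input sites is active,
and the second site is active iff it is a left-moving flag. -/
theorem fwd_classify : ∀ (b : Bool) (x y x' y' : LSym), fwdPair b x y = some (x', y') →
    ((isActive x = true ∧ isActive y = false ∧ x ≠ lflag) ∨
     (isActive x = false ∧ isActive y = true ∧ y = lflag)) := by decide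

/-- In the output of every rule, exactly one of the two sites is active,
and the first site is active iff it is a left-moving flag. -/
theorem fwd_out : ∀ (b : Bool) (x y x' y' : LSym), fwdPair b x y = some (x', y') →
    ((isActive x' = true ∧ isActive y' = false ∧ x' = lflag) ∨
     (isActive x' = false ∧ isActive y' = true ∧ y' ≠ lflag)) := by decide

theorem fwd_inj0 : ∀ (b : Bool) (x y x2 y2 : LSym),
    fwdPair b x y ≠ none → fwdPair b x y = fwdPair b x2 y2 → x = x2 ∧ y = y2 := by decide

/-- For a fixed boundary flag, the rewrite rules are backward deterministic. -/
theorem fwd_inj {b : Bool} {x y x2 y2 x' y' : LSym}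
    (h1 : fwdPair b x y = some (x', y')) (h2 : fwdPair b x2 y2 = some (x', y')) :
    x = x2 ∧ y = y2 :=
  fwd_inj0 b x y x2 y2 (by simp [h1]) (h1.trans h2.symm)

/-- A configuration with `activeCount` one has a unique active site. -/
theorem unique_active {L : ℕ} {c : ℕ → LSym} (h : activeCount L c = 1) :
    ∃ p, p < L ∧ isActive (c p) = true ∧ ∀ q, q < L → isActive (c q) = true → q = p := by
  obtain ⟨p, hp⟩ := Finset.card_eq_one.mp h
  have hpm : p ∈ (Finset.range L).filter (fun i => isActive (c i) = true) := by
    rw [hp]; exact Finset.mem_singleton_self p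
  rw [Finset.mem_filter, Finset.mem_range] at hpm
  refine ⟨p, hpm.1, hpm.2, fun q hq ha => ?_⟩
  have hqm : q ∈ (Finset.range L).filter (fun i => isActive (c i) = true) := by
    rw [Finset.mem_filter, Finset.mem_range]; exact ⟨hq, ha⟩
  rw [hp, Finset.mem_singleton] at hqm
  exact hqm

/-- Every configuration containing exactly one active site has at most one
applicable forward transition rule and at most one applicable backward
transition rule. -/
theorem at_most_one_transition (n R : ℕ) (hn : 1 ≤ n) (hR : 1 ≤ R)
    (c : ℕ → LSym) (hone : activeCount (n * R) c = 1) :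
    (∀ c1 c2 : ℕ → LSym, Step n R c c1 → Step n R c c2 → c1 = c2) ∧
    (∀ c1 c2 : ℕ → LSym, Step n R c1 c → Step n R c2 c → c1 = c2) := by
  obtain ⟨p, hpL, hpa, huniq⟩ := unique_active hone
  have hL : 0 < n * R := Nat.mul_pos hn hR
  have hsub : n * R - 1 + 1 = n * R := Nat.succ_pred_eq_of_pos hL
  have hlast : n * R - 1 < n * R := Nat.sub_lt hL one_pos
  constructor
  · -- forward uniqueness
    intro c1 c2 h1 h2
    rcases h1 with ⟨i, hi, hf, ho⟩ | ⟨ht, ht1, ho⟩ | ⟨hl, hl1, ho⟩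
    · rcases h2 with ⟨i', hi', hf', ho'⟩ | ⟨ht', ht1', ho'⟩ | ⟨hl', hl1', ho'⟩
      · -- pair / pair
        have hc := fwd_classify _ _ _ _ _ hf
        have hc' := fwd_classify _ _ _ _ _ hf'
        have hii' : i = i' := by
          rcases hc with ⟨ha, _, hnl⟩ | ⟨_, ha, hlf⟩ <;>
            rcases hc' with ⟨ha', _, hnl'⟩ | ⟨_, ha', hlf'⟩
          · rw [huniq i (by omega) ha, huniq i' (by omega) ha']
          · have e1 := huniq i (by omega) ha
            have e2 := huniq (i' + 1) (by omega) ha'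
            have e3 : i = i' + 1 := by omega
            rw [e3] at hnl; exact absurd hlf' hnl
          · have e1 := huniq (i + 1) (by omega) ha
            have e2 := huniq i' (by omega) ha'
            have e3 : i' = i + 1 := by omega
            rw [e3] at hnl'; exact absurd hlf hnl'
          · have e1 := huniq (i + 1) (by omega) ha
            have e2 := huniq (i' + 1) (by omega) ha'
            omega
        subst hii'
        rw [hf] at hf'
        have h12 := Option.some.inj hf'
        have e1 : c1 i = c2 i := congrArg Prod.fst h12
        have e2 : c1 (i + 1) = c2 (i + 1) := congrArg Prod.snd h12
        funext j
        by_cases hj : j = i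
        · subst hj; exact e1
        · by_cases hj' : j = i + 1
          · subst hj'; exact e2
          · exact (ho j hj hj').trans (ho' j hj hj').symm
      · -- pair / right-end
        exfalso
        have ep : n * R - 1 = p := huniq _ hlast (by rw [ht']; rfl)
        rcases fwd_classify _ _ _ _ _ hf with ⟨ha, _, hnl⟩ | ⟨_, ha, hlf⟩
        · have e1 := huniq i (by omega) ha
          omega
        · have e1 := huniq (i + 1) (by omega) ha
          have e3 : i + 1 = n * R - 1 := by omega
          rw [e3, ht'] at hlf; exact absurd hlf (by decide)
      · -- pair / left-end
        exfalso
        have ep : (0 : ℕ) = p := huniq 0 (by omega) (by rw [hl']; rfl)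
        rcases fwd_classify _ _ _ _ _ hf with ⟨ha, _, hnl⟩ | ⟨_, ha, hlf⟩
        · have e1 := huniq i (by omega) ha
          have e3 : i = 0 := by omega
          rw [e3] at hnl; exact absurd hl' hnl
        · have e1 := huniq (i + 1) (by omega) ha
          omega
    · rcases h2 with ⟨i', hi', hf', ho'⟩ | ⟨ht', ht1', ho'⟩ | ⟨hl', hl1', ho'⟩
      · -- right-end / pair
        exfalso
        have ep : n * R - 1 = p := huniq _ hlast (by rw [ht]; rfl)
        rcases fwd_classify _ _ _ _ _ hf' with ⟨ha, _, hnl⟩ | ⟨_, ha, hlf⟩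
        · have e1 := huniq i' (by omega) ha
          omega
        · have e1 := huniq (i' + 1) (by omega) ha
          have e3 : i' + 1 = n * R - 1 := by omega
          rw [e3, ht] at hlf; exact absurd hlf (by decide)
      · -- right-end / right-end
        funext j
        by_cases hj : j = n * R - 1
        · subst hj; rw [ht1, ht1']
        · exact (ho j hj).trans (ho' j hj).symm
      · -- right-end / left-end
        exfalso
        have e1 : n * R - 1 = p := huniq _ hlast (by rw [ht]; rfl)
        have e2 : (0 : ℕ) = p := huniq 0 (by omega) (by rw [hl']; rfl)
        have e3 : n * R - 1 = 0 := by omega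
        rw [e3] at ht
        exact absurd (ht.symm.trans hl') (by decide)
    · rcases h2 with ⟨i', hi', hf', ho'⟩ | ⟨ht', ht1', ho'⟩ | ⟨hl', hl1', ho'⟩
      · -- left-end / pair
        exfalso
        have ep : (0 : ℕ) = p := huniq 0 (by omega) (by rw [hl]; rfl)
        rcases fwd_classify _ _ _ _ _ hf' with ⟨ha, _, hnl⟩ | ⟨_, ha, hlf⟩
        · have e1 := huniq i' (by omega) ha
          have e3 : i' = 0 := by omega
          rw [e3] at hnl; exact absurd hl hnl
        · have e1 := huniq (i' + 1) (by omega) ha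
          omega
      · -- left-end / right-end
        exfalso
        have e1 : n * R - 1 = p := huniq _ hlast (by rw [ht']; rfl)
        have e2 : (0 : ℕ) = p := huniq 0 (by omega) (by rw [hl]; rfl)
        have e3 : n * R - 1 = 0 := by omega
        rw [e3] at ht'
        exact absurd (ht'.symm.trans hl) (by decide)
      · -- left-end / left-end
        funext j
        by_cases hj : j = 0
        · subst hj; rw [hl1, hl1']
        · exact (ho j hj).trans (ho' j hj).symm
  · -- backward uniqueness
    intro c1 c2 h1 h2
    rcases h1 with ⟨i, hi, hf, ho⟩ | ⟨ht, ht1, ho⟩ | ⟨hl, hl1, ho⟩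
    · rcases h2 with ⟨i', hi', hf', ho'⟩ | ⟨ht', ht1', ho'⟩ | ⟨hl', hl1', ho'⟩
      · -- pair / pair
        have hc := fwd_out _ _ _ _ _ hf
        have hc' := fwd_out _ _ _ _ _ hf'
        have hii' : i = i' := by
          rcases hc with ⟨ha, _, hlf⟩ | ⟨_, ha, hnl⟩ <;>
            rcases hc' with ⟨ha', _, hlf'⟩ | ⟨_, ha', hnl'⟩
          · rw [huniq i (by omega) ha, huniq i' (by omega) ha']
          · have e1 := huniq i (by omega) ha
            have e2 := huniq (i' + 1) (by omega) ha'
            have e3 : i' + 1 = i := by omega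
            rw [e3] at hnl'; exact absurd hlf hnl'
          · have e1 := huniq (i + 1) (by omega) ha
            have e2 := huniq i' (by omega) ha'
            have e3 : i + 1 = i' := by omega
            rw [e3] at hnl; exact absurd hlf' hnl
          · have e1 := huniq (i + 1) (by omega) ha
            have e2 := huniq (i' + 1) (by omega) ha'
            omega
        subst hii'
        obtain ⟨e1, e2⟩ := fwd_inj hf hf'
        funext j
        by_cases hj : j = i
        · subst hj; exact e1
        · by_cases hj' : j = i + 1
          · subst hj'; exact e2
          · exact (ho j hj hj').symm.trans (ho' j hj hj')
      · -- pair / right-end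
        exfalso
        have ep : n * R - 1 = p := huniq _ hlast (by rw [ht1']; rfl)
        rcases fwd_out _ _ _ _ _ hf with ⟨ha, _, hlf⟩ | ⟨_, ha, hnl⟩
        · have e1 := huniq i (by omega) ha
          omega
        · have e1 := huniq (i + 1) (by omega) ha
          have e3 : i + 1 = n * R - 1 := by omega
          rw [e3, ht1'] at hnl; exact hnl rfl
      · -- pair / left-end
        exfalso
        have ep : (0 : ℕ) = p := huniq 0 (by omega) (by rw [hl1']; rfl)
        rcases fwd_out _ _ _ _ _ hf with ⟨ha, _, hlf⟩ | ⟨_, ha, hnl⟩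
        · have e1 := huniq i (by omega) ha
          have e3 : i = 0 := by omega
          rw [e3, hl1'] at hlf; exact absurd hlf (by decide)
        · have e1 := huniq (i + 1) (by omega) ha
          omega
    · rcases h2 with ⟨i', hi', hf', ho'⟩ | ⟨ht', ht1', ho'⟩ | ⟨hl', hl1', ho'⟩
      · -- right-end / pair
        exfalso
        have ep : n * R - 1 = p := huniq _ hlast (by rw [ht1]; rfl)
        rcases fwd_out _ _ _ _ _ hf' with ⟨ha, _, hlf⟩ | ⟨_, ha, hnl⟩
        · have e1 := huniq i' (by omega) ha
          omega
        · have e1 := huniq (i' + 1) (by omega) ha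
          have e3 : i' + 1 = n * R - 1 := by omega
          rw [e3, ht1] at hnl; exact hnl rfl
      · -- right-end / right-end
        funext j
        by_cases hj : j = n * R - 1
        · subst hj; rw [ht, ht']
        · exact (ho j hj).symm.trans (ho' j hj)
      · -- right-end / left-end
        exfalso
        have e1 : n * R - 1 = p := huniq _ hlast (by rw [ht1]; rfl)
        have e2 : (0 : ℕ) = p := huniq 0 (by omega) (by rw [hl1']; rfl)
        have e3 : n * R - 1 = 0 := by omega
        rw [e3] at ht1
        exact absurd (ht1.symm.trans hl1') (by decide)
    · rcases h2 with ⟨i', hi', hf', ho'⟩ | ⟨ht', ht1', ho'⟩ | ⟨hl', hl1', ho'⟩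
      · -- left-end / pair
        exfalso
        have ep : (0 : ℕ) = p := huniq 0 (by omega) (by rw [hl1]; rfl)
        rcases fwd_out _ _ _ _ _ hf' with ⟨ha, _, hlf⟩ | ⟨_, ha, hnl⟩
        · have e1 := huniq i' (by omega) ha
          have e3 : i' = 0 := by omega
          rw [e3, hl1] at hlf; exact absurd hlf (by decide)
        · have e1 := huniq (i' + 1) (by omega) ha
          omega
      · -- left-end / right-end
        exfalso
        have e1 : n * R - 1 = p := huniq _ hlast (by rw [ht1']; rfl)
        have e2 : (0 : ℕ) = p := huniq 0 (by omega) (by rw [hl1]; rfl)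
        have e3 : n * R - 1 = 0 := by omega
        rw [e3] at ht1'
        exact absurd (ht1'.symm.trans hl1) (by decide)
      · -- left-end / left-end
        funext j
        by_cases hj : j = 0
        · subst hj; rw [hl, hl']
        · exact (ho j hj).symm.trans (ho' j hj)
end

section
/- In the 12-state line construction, every legal configuration other than the final configuration has exactly one applicable forward transition rule, and every legal configuration other than the initial configuration has exactly one applicable backward transition rule. Consequently, the set of legal configurations forms a single directed path of length K under the transition relation. -/
open LSym

/-- The overall shape of a configuration with exactly one active site: `a`
leading `dead` sites, then a qubit string occupying positions `[a, b)`
consisting of `q2`'s, a single active site at position `p`, and `q1`'s, and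
then `unborn` sites up to the end of the line. -/
def Shape (n R : ℕ) (c : ℕ → LSym) (a p b : ℕ) : Prop :=
  a ≤ p ∧ p < b ∧ b ≤ n * R ∧
  (∀ i, i < a → c i = dead) ∧
  (∀ i, a ≤ i → i < p → c i = q2) ∧
  isActive (c p) = true ∧
  (∀ i, p < i → i < b → c i = q1) ∧
  (∀ i, b ≤ i → i < n * R → c i = unborn)

/-- The five legal forms of the qubit string: `2⋯2 g 1⋯1` of length `n` aligned
with a block, `2⋯2 r 1⋯1` of length `n` crossing a block boundary,
`2⋯2 l 1⋯1` of length `n+1`, `t 1⋯1` of length `n+1`, or `2⋯2 t` of length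
`n+1`. -/
def LegalForm (n : ℕ) (c : ℕ → LSym) (a p b : ℕ) : Prop :=
  (c p = gate ∧ b = a + n ∧ a % n = 0) ∨
  (c p = rflag ∧ b = a + n ∧ a % n ≠ 0) ∨
  (c p = lflag ∧ b = a + n + 1) ∨
  (c p = turn ∧ b = a + n + 1 ∧ (p = a ∨ p + 1 = b))

/-- Legal (valid) configurations of the construction. -/
def Legal (n R : ℕ) (c : ℕ → LSym) : Prop :=
  ∃ a p b, Shape n R c a p b ∧ LegalForm n c a p b

/-- The initial configuration: `g 1⋯1` filling the first block, `unborn`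
elsewhere. -/
def InitC (n : ℕ) : ℕ → LSym := fun i =>
  if i = 0 then gate else if i < n then q1 else unborn

/-- The final configuration: `dead` everywhere except the last block, which
holds `2⋯2 g`. -/
def FinalC (n R : ℕ) : ℕ → LSym := fun i =>
  if i + 1 = n * R then gate else if n * (R - 1) ≤ i then q2 else dead

namespace LPath
open LSym

lemma fwdPair_spec {bb : Bool} {x y z w : LSym} (h : fwdPair bb x y = some (z, w)) :
    (bb = false ∧ x = gate ∧ y = q1 ∧ z = q2 ∧ w = gate) ∨
    (bb = true ∧ x = gate ∧ y = unborn ∧ z = q2 ∧ w = turn) ∨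
    (x = turn ∧ y = unborn ∧ z = lflag ∧ w = unborn) ∨
    (x = q2 ∧ y = lflag ∧ z = lflag ∧ w = q1) ∨
    (x = dead ∧ y = lflag ∧ z = dead ∧ w = turn) ∨
    (bb = true ∧ x = turn ∧ y = q1 ∧ z = dead ∧ w = gate) ∨
    (bb = false ∧ x = turn ∧ y = q1 ∧ z = dead ∧ w = rflag) ∨
    (x = rflag ∧ y = q1 ∧ z = q2 ∧ w = rflag) ∨
    (bb = false ∧ x = rflag ∧ y = unborn ∧ z = q2 ∧ w = turn) := by
  cases x <;> cases y <;> cases bb <;> simp_all [fwdPair]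

def cfg (a p b : ℕ) (s : LSym) : ℕ → LSym := fun i =>
  if i < a then dead else if i < p then q2 else if i = p then s
  else if i < b then q1 else unborn

lemma cfg_self {a p b : ℕ} (s : LSym) (h : a ≤ p) : cfg a p b s p = s := by
  simp only [cfg]; split_ifs <;> first | rfl | omega

lemma cfg_shape {n R a p b : ℕ} {s : LSym} (h1 : a ≤ p) (h2 : p < b) (h3 : b ≤ n * R)
    (h4 : isActive s = true) : Shape n R (cfg a p b s) a p b := by
  refine ⟨h1, h2, h3, ?_, ?_, ?_, ?_, ?_⟩
  · intros i hi; simp only [cfg]; split_ifs <;> first | rfl | omega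
  · intros i hi hi2; simp only [cfg]; split_ifs <;> first | rfl | omega
  · rw [cfg_self s h1]; exact h4
  · intros i hi hi2; simp only [cfg]; split_ifs <;> first | rfl | omega
  · intros i hi hi2; simp only [cfg]; split_ifs <;> first | rfl | omega

def nextVal (n : ℕ) (c : ℕ → LSym) (a p b : ℕ) : ℕ → LSym := fun j =>
  match c p with
  | gate => if j = p then q2 else if j = p + 1 then (if p + 1 = b then turn else gate) else c j
  | rflag => if j = p then q2 else if j = p + 1 then (if p + 1 = b then turn else rflag) else c j
  | turn => if p = a then
      (if j = a then dead else if j = a + 1 then (if (a+1) % n = 0 then gate else rflag) else c j)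
      else (if j = p then lflag else c j)
  | lflag => if p = a then (if j = p then turn else c j)
      else (if j = p - 1 then lflag else if j = p then q1 else c j)
  | _ => c j

lemma fwd_det {n R : ℕ} {c c' : ℕ → LSym} {a p b : ℕ} (hn : 2 ≤ n) (hR : 2 ≤ R)
    (hs : Shape n R c a p b) (hf : LegalForm n c a p b)
    (h : Step n R c c') (j : ℕ) : c' j = nextVal n c a p b j := by
  obtain ⟨hap, hpb, hbR, hd, hq2, hact, hq1, hu⟩ := hs
  have hNR : 0 < n * R := Nat.mul_pos (by omega) (by omega)
  have hsym : ∀ i, i < n*R → isActive (c i) = true → i = p := by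
    intro i hi hA
    by_contra hne
    rcases Nat.lt_or_ge i a with h'|h'
    · rw [hd i h'] at hA; simp [isActive] at hA
    rcases Nat.lt_or_ge i p with h''|h''
    · rw [hq2 i h' h''] at hA; simp [isActive] at hA
    rcases Nat.lt_or_ge i b with h3|h3
    · rw [hq1 i (by omega) h3] at hA; simp [isActive] at hA
    · rw [hu i h3 hi] at hA; simp [isActive] at hA
  rcases h with ⟨i, hi, hfp, hrest⟩ | ⟨h1, h2, h3⟩ | ⟨h1, h2, h3⟩
  · rcases fwdPair_spec hfp with ⟨hbb,hx,hy,hz,hw⟩|⟨hbb,hx,hy,hz,hw⟩|⟨hx,hy,hz,hw⟩|⟨hx,hy,hz,hw⟩|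
      ⟨hx,hy,hz,hw⟩|⟨hbb,hx,hy,hz,hw⟩|⟨hbb,hx,hy,hz,hw⟩|⟨hx,hy,hz,hw⟩|⟨hbb,hx,hy,hz,hw⟩
    -- rule 1 : gate q1 → q2 gate
    · have hip : i = p := hsym i (by omega) (by rw [hx]; rfl)
      subst hip
      have hp1b : i + 1 < b := by
        rcases Nat.lt_or_ge (i+1) b with h'|h'
        · exact h'
        · rw [hu (i+1) h' hi] at hy; cases hy
      simp only [nextVal, hx]
      by_cases hj1 : j = i
      · subst hj1; rw [if_pos rfl]; exact hz
      by_cases hj2 : j = i + 1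
      · subst hj2; rw [if_neg hj1, if_pos rfl, if_neg (by omega)]; exact hw
      · rw [if_neg hj1, if_neg hj2]; exact hrest j hj1 hj2
    -- rule 2 : gate unborn → q2 turn
    · have hip : i = p := hsym i (by omega) (by rw [hx]; rfl)
      subst hip
      have hp1b : i + 1 = b := by
        rcases Nat.lt_or_ge (i+1) b with h'|h'
        · rw [hq1 (i+1) (by omega) h'] at hy; cases hy
        · omega
      simp only [nextVal, hx]
      by_cases hj1 : j = i
      · subst hj1; rw [if_pos rfl]; exact hz
      by_cases hj2 : j = i + 1
      · subst hj2; rw [if_neg hj1, if_pos rfl, if_pos hp1b]; exact hw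
      · rw [if_neg hj1, if_neg hj2]; exact hrest j hj1 hj2
    -- rule 3 : turn unborn → lflag unborn
    · have hip : i = p := hsym i (by omega) (by rw [hx]; rfl)
      subst hip
      have hb : b = a + n + 1 := by
        rcases hf with ⟨hcp,_,_⟩|⟨hcp,_,_⟩|⟨hcp,_⟩|⟨hcp,hb,_⟩
        · rw [hx] at hcp; cases hcp
        · rw [hx] at hcp; cases hcp
        · rw [hx] at hcp; cases hcp
        · exact hb
      have hpa : ¬ (i = a) := by
        intro hh
        have : c (i+1) = q1 := hq1 (i+1) (by omega) (by omega)
        rw [hy] at this; cases this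
      simp only [nextVal, hx]
      rw [if_neg hpa]
      by_cases hj1 : j = i
      · subst hj1; rw [if_pos rfl]; exact hz
      · rw [if_neg hj1]
        by_cases hj2 : j = i + 1
        · subst hj2; rw [hw, hy]
        · exact hrest j hj1 hj2
    -- rule 4 : q2 lflag → lflag q1
    · have hip : i + 1 = p := hsym (i+1) (by omega) (by rw [hy]; rfl)
      subst hip
      have hpa : ¬ (i + 1 = a) := by
        intro hh
        have : c i = dead := hd i (by omega)
        rw [hx] at this; cases this
      simp only [nextVal, hy]
      rw [if_neg hpa]
      by_cases hj1 : j = i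
      · subst hj1; rw [if_pos (by omega)]; exact hz
      by_cases hj2 : j = i + 1
      · subst hj2; rw [if_neg (by omega), if_pos rfl]; exact hw
      · rw [if_neg (by omega), if_neg hj2]; exact hrest j hj1 hj2
    -- rule 5 : dead lflag → dead turn
    · have hip : i + 1 = p := hsym (i+1) (by omega) (by rw [hy]; rfl)
      subst hip
      have hia : i < a := by
        by_contra hh
        have : c i = q2 := hq2 i (by omega) (by omega)
        rw [hx] at this; cases this
      have hpa : i + 1 = a := by omega
      simp only [nextVal, hy]
      rw [if_pos hpa]
      by_cases hj2 : j = i + 1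
      · subst hj2; rw [if_pos rfl]; exact hw
      · rw [if_neg hj2]
        by_cases hj1 : j = i
        · subst hj1; rw [hz, hx]
        · exact hrest j hj1 hj2
    -- rule 6 : turn q1 → dead gate (boundary)
    · have hip : i = p := hsym i (by omega) (by rw [hx]; rfl)
      subst hip
      have hb : b = a + n + 1 ∧ (i = a ∨ i + 1 = b) := by
        rcases hf with ⟨hcp,_,_⟩|⟨hcp,_,_⟩|⟨hcp,_⟩|⟨hcp,hb,hor⟩
        · rw [hx] at hcp; cases hcp
        · rw [hx] at hcp; cases hcp
        · rw [hx] at hcp; cases hcp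
        · exact ⟨hb, hor⟩
      have hp1b : ¬ (i + 1 = b) := by
        intro hh
        have : c (i+1) = unborn := hu (i+1) (by omega) hi
        rw [hy] at this; cases this
      have hia : i = a := by rcases hb.2 with h'|h'; exact h'; exact absurd h' hp1b
      subst hia
      have hmod : (i + 1) % n = 0 := of_decide_eq_true hbb
      simp only [nextVal, hx]
      rw [if_pos trivial]
      by_cases hj1 : j = i
      · subst hj1; rw [if_pos rfl]; exact hz
      by_cases hj2 : j = i + 1
      · subst hj2; rw [if_neg hj1, if_pos rfl, if_pos hmod]; exact hw
      · rw [if_neg hj1, if_neg hj2]; exact hrest j (by omega) (by omega)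
    -- rule 6' : turn q1 → dead rflag (no boundary)
    · have hip : i = p := hsym i (by omega) (by rw [hx]; rfl)
      subst hip
      have hb : b = a + n + 1 ∧ (i = a ∨ i + 1 = b) := by
        rcases hf with ⟨hcp,_,_⟩|⟨hcp,_,_⟩|⟨hcp,_⟩|⟨hcp,hb,hor⟩
        · rw [hx] at hcp; cases hcp
        · rw [hx] at hcp; cases hcp
        · rw [hx] at hcp; cases hcp
        · exact ⟨hb, hor⟩
      have hp1b : ¬ (i + 1 = b) := by
        intro hh
        have : c (i+1) = unborn := hu (i+1) (by omega) hi
        rw [hy] at this; cases this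
      have hia : i = a := by rcases hb.2 with h'|h'; exact h'; exact absurd h' hp1b
      subst hia
      have hmod : ¬ ((i + 1) % n = 0) := of_decide_eq_false hbb
      simp only [nextVal, hx]
      rw [if_pos trivial]
      by_cases hj1 : j = i
      · subst hj1; rw [if_pos rfl]; exact hz
      by_cases hj2 : j = i + 1
      · subst hj2; rw [if_neg hj1, if_pos rfl, if_neg hmod]; exact hw
      · rw [if_neg hj1, if_neg hj2]; exact hrest j (by omega) (by omega)
    -- rule 7 : rflag q1 → q2 rflag
    · have hip : i = p := hsym i (by omega) (by rw [hx]; rfl)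
      subst hip
      have hp1b : i + 1 < b := by
        rcases Nat.lt_or_ge (i+1) b with h'|h'
        · exact h'
        · rw [hu (i+1) h' hi] at hy; cases hy
      simp only [nextVal, hx]
      by_cases hj1 : j = i
      · subst hj1; rw [if_pos rfl]; exact hz
      by_cases hj2 : j = i + 1
      · subst hj2; rw [if_neg hj1, if_pos rfl, if_neg (by omega)]; exact hw
      · rw [if_neg hj1, if_neg hj2]; exact hrest j hj1 hj2
    -- rule 8 : rflag unborn → q2 turn
    · have hip : i = p := hsym i (by omega) (by rw [hx]; rfl)
      subst hip
      have hp1b : i + 1 = b := by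
        rcases Nat.lt_or_ge (i+1) b with h'|h'
        · rw [hq1 (i+1) (by omega) h'] at hy; cases hy
        · omega
      simp only [nextVal, hx]
      by_cases hj1 : j = i
      · subst hj1; rw [if_pos rfl]; exact hz
      by_cases hj2 : j = i + 1
      · subst hj2; rw [if_neg hj1, if_pos rfl, if_pos hp1b]; exact hw
      · rw [if_neg hj1, if_neg hj2]; exact hrest j hj1 hj2
  -- end-turn rule
  · have hip : n * R - 1 = p := hsym (n*R-1) (by omega) (by rw [h1]; rfl)
    have hx : c p = turn := by rw [← hip]; exact h1
    have hb : b = a + n + 1 := by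
      rcases hf with ⟨hcp,_,_⟩|⟨hcp,_,_⟩|⟨hcp,_⟩|⟨hcp,hb,_⟩
      · rw [hx] at hcp; cases hcp
      · rw [hx] at hcp; cases hcp
      · rw [hx] at hcp; cases hcp
      · exact hb
    have hpa : ¬ (p = a) := by omega
    simp only [nextVal, hx]
    rw [if_neg hpa]
    by_cases hj1 : j = p
    · subst hj1; rw [if_pos rfl, ← hip]; exact h2
    · rw [if_neg hj1]; exact h3 j (by omega)
  -- start-lflag rule
  · have hip : (0:ℕ) = p := hsym 0 hNR (by rw [h1]; rfl)
    have hx : c p = lflag := by rw [← hip]; exact h1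
    have hpa : p = a := by omega
    simp only [nextVal, hx]
    rw [if_pos hpa]
    by_cases hj1 : j = p
    · subst hj1; rw [if_pos rfl, ← hip]; exact h2
    · rw [if_neg hj1]; exact h3 j (by omega)

lemma mod_between {n a x : ℕ} (hn : 0 < n) (h : a % n = 0) (h1 : a < x) (h2 : x < a + n) :
    x % n ≠ 0 := by
  obtain ⟨k, rfl⟩ := Nat.dvd_of_mod_eq_zero h
  have hx : x = n * k + (x - n * k) := by omega
  rw [hx, Nat.mul_add_mod, Nat.mod_eq_of_lt (by omega)]
  omega

lemma fwd_ex {n R : ℕ} {c : ℕ → LSym} {a p b : ℕ} (hn : 2 ≤ n) (hR : 2 ≤ R)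
    (hs : Shape n R c a p b) (hf : LegalForm n c a p b)
    (hnf : ¬ (c p = gate ∧ p + 1 = b ∧ b = n * R)) :
    Step n R c (nextVal n c a p b) := by
  obtain ⟨hap, hpb, hbR, hd, hq2, hact, hq1, hu⟩ := hs
  rcases hf with ⟨hcp, hb, hmod⟩|⟨hcp, hb, hmod⟩|⟨hcp, hb⟩|⟨hcp, hb, hor⟩
  · -- gate
    by_cases h1 : p + 1 < b
    · left
      refine ⟨p, by omega, ?_, ?_⟩
      · have e1 : nextVal n c a p b p = q2 := by
          simp only [nextVal, hcp]; rw [if_pos trivial]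
        have e2 : nextVal n c a p b (p+1) = gate := by
          simp only [nextVal, hcp]; rw [if_neg (by omega), if_pos trivial, if_neg (by omega)]
        have hm : ¬ ((p+1) % n = 0) := mod_between (by omega) hmod (by omega) (by omega)
        rw [e1, e2, hcp, hq1 (p+1) (by omega) h1]
        simp [fwdPair, hm]
      · intro j hj1 hj2
        simp only [nextVal, hcp]; rw [if_neg hj1, if_neg hj2]
    · have hpb1 : p + 1 = b := by omega
      have hblt : b < n * R := by
        rcases Nat.lt_or_ge b (n * R) with h'|h'
        · exact h'
        · exact absurd ⟨hcp, hpb1, by omega⟩ hnf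
      left
      refine ⟨p, by omega, ?_, ?_⟩
      · have e1 : nextVal n c a p b p = q2 := by
          simp only [nextVal, hcp]; rw [if_pos trivial]
        have e2 : nextVal n c a p b (p+1) = turn := by
          simp only [nextVal, hcp]; rw [if_neg (by omega), if_pos trivial, if_pos hpb1]
        have hm : (p+1) % n = 0 := by
          rw [hpb1, hb, Nat.add_mod_right]; exact hmod
        rw [e1, e2, hcp, hu (p+1) (by omega) (by omega)]
        simp [fwdPair, hm]
      · intro j hj1 hj2
        simp only [nextVal, hcp]; rw [if_neg hj1, if_neg hj2]
  · -- rflag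
    by_cases h1 : p + 1 < b
    · left
      refine ⟨p, by omega, ?_, ?_⟩
      · have e1 : nextVal n c a p b p = q2 := by
          simp only [nextVal, hcp]; rw [if_pos trivial]
        have e2 : nextVal n c a p b (p+1) = rflag := by
          simp only [nextVal, hcp]; rw [if_neg (by omega), if_pos trivial, if_neg (by omega)]
        rw [e1, e2, hcp, hq1 (p+1) (by omega) h1]
        simp [fwdPair]
      · intro j hj1 hj2
        simp only [nextVal, hcp]; rw [if_neg hj1, if_neg hj2]
    · have hpb1 : p + 1 = b := by omega
      have hbm : ¬ (b % n = 0) := by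
        rw [hb, Nat.add_mod_right]; exact hmod
      have hblt : b < n * R := by
        rcases Nat.lt_or_ge b (n * R) with h'|h'
        · exact h'
        · have : b = n * R := by omega
          rw [this, Nat.mul_mod_right] at hbm; omega
      left
      refine ⟨p, by omega, ?_, ?_⟩
      · have e1 : nextVal n c a p b p = q2 := by
          simp only [nextVal, hcp]; rw [if_pos trivial]
        have e2 : nextVal n c a p b (p+1) = turn := by
          simp only [nextVal, hcp]; rw [if_neg (by omega), if_pos trivial, if_pos hpb1]
        have hm : ¬ ((p+1) % n = 0) := by rw [hpb1]; exact hbm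
        rw [e1, e2, hcp, hu (p+1) (by omega) (by omega)]
        simp [fwdPair, hm]
      · intro j hj1 hj2
        simp only [nextVal, hcp]; rw [if_neg hj1, if_neg hj2]
  · -- lflag
    rcases Nat.lt_or_ge a p with hpa|hpa
    · -- p > a : rule 4
      left
      refine ⟨p - 1, by omega, ?_, ?_⟩
      · have hpp : p - 1 + 1 = p := by omega
        have e1 : nextVal n c a p b (p-1) = lflag := by
          simp only [nextVal, hcp]; rw [if_neg (by omega), if_pos trivial]
        have e2 : nextVal n c a p b (p-1+1) = q1 := by
          simp only [nextVal, hcp]; rw [if_neg (by omega), if_neg (by omega), if_pos hpp]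
        rw [e1, e2, hpp, hcp, hq2 (p-1) (by omega) (by omega)]
        simp [fwdPair]
      · intro j hj1 hj2
        simp only [nextVal, hcp]
        rw [if_neg (by omega), if_neg hj1, if_neg (by omega)]
    · have hpa' : p = a := by omega
      rcases Nat.eq_zero_or_pos a with ha0|ha0
      · -- p = a = 0 : start rule
        right; right
        refine ⟨by rw [show (0:ℕ) = p by omega]; exact hcp, ?_, ?_⟩
        · simp only [nextVal, hcp]; rw [if_pos hpa', if_pos (by omega)]
        · intro j hj
          simp only [nextVal, hcp]; rw [if_pos hpa', if_neg (by omega)]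
      · -- p = a > 0 : rule 5
        left
        refine ⟨a - 1, by omega, ?_, ?_⟩
        · have haa : a - 1 + 1 = a := by omega
          have e1 : nextVal n c a p b (a-1) = dead := by
            simp only [nextVal, hcp]; rw [if_pos hpa', if_neg (by omega)]
            exact hd (a-1) (by omega)
          have e2 : nextVal n c a p b (a-1+1) = turn := by
            simp only [nextVal, hcp]; rw [if_pos hpa', if_pos (by omega)]
          rw [e1, e2, haa, hd (a-1) (by omega), show a = p by omega, hcp]
          simp [fwdPair]
        · intro j hj1 hj2
          simp only [nextVal, hcp]; rw [if_pos hpa', if_neg (by omega)]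
  · -- turn
    rcases hor with hpa|hpb1
    · -- p = a : rule 6
      left
      refine ⟨p, by omega, ?_, ?_⟩
      · have e1 : nextVal n c a p b p = dead := by
          simp only [nextVal, hcp]; rw [if_pos hpa, if_pos (by omega)]
        have e2 : nextVal n c a p b (p+1) =
            (if (a+1) % n = 0 then gate else rflag) := by
          simp only [nextVal, hcp]; rw [if_pos hpa, if_neg (by omega), if_pos (by omega)]
        rw [e1, e2, hcp, hq1 (p+1) (by omega) (by omega), hpa]
        by_cases hm : (a+1) % n = 0 <;> simp [fwdPair, hm]
      · intro j hj1 hj2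
        simp only [nextVal, hcp]; rw [if_pos hpa, if_neg (by omega), if_neg (by omega)]
    · -- p + 1 = b
      have hpa : ¬ (p = a) := by omega
      rcases Nat.lt_or_ge b (n * R) with hblt|hbge
      · left
        refine ⟨p, by omega, ?_, ?_⟩
        · have e1 : nextVal n c a p b p = lflag := by
            simp only [nextVal, hcp]; rw [if_neg hpa, if_pos trivial]
          have e2 : nextVal n c a p b (p+1) = unborn := by
            simp only [nextVal, hcp]; rw [if_neg hpa, if_neg (by omega)]
            exact hu (p+1) (by omega) (by omega)
          rw [e1, e2, hcp, hu (p+1) (by omega) (by omega)]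
          simp [fwdPair]
        · intro j hj1 hj2
          simp only [nextVal, hcp]; rw [if_neg hpa, if_neg hj1]
      · have hbeq : b = n * R := by omega
        right; left
        have hpnr : n * R - 1 = p := by omega
        refine ⟨by rw [hpnr]; exact hcp, ?_, ?_⟩
        · rw [hpnr]; simp only [nextVal, hcp]; rw [if_neg hpa, if_pos trivial]
        · intro j hj
          simp only [nextVal, hcp]; rw [if_neg hpa, if_neg (by omega)]

def prevVal (n : ℕ) (c : ℕ → LSym) (a p b : ℕ) : ℕ → LSym := fun j =>
  match c p with
  | gate => if p = a then (if j = a - 1 then turn else if j = a then q1 else c j)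
      else (if j = p - 1 then gate else if j = p then q1 else c j)
  | rflag => if p = a then (if j = a - 1 then turn else if j = a then q1 else c j)
      else (if j = p - 1 then rflag else if j = p then q1 else c j)
  | lflag => if p + 1 = b then (if j = p then turn else c j)
      else (if j = p then q2 else if j = p + 1 then lflag else c j)
  | turn => if p = a then (if j = p then lflag else c j)
      else (if j = p - 1 then (if p % n = 0 then gate else rflag)
            else if j = p then unborn else c j)
  | _ => c j

lemma bwd_det {n R : ℕ} {c c' : ℕ → LSym} {a p b : ℕ} (hn : 2 ≤ n) (hR : 2 ≤ R)
    (hs : Shape n R c a p b) (hf : LegalForm n c a p b)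
    (h : Step n R c' c) (j : ℕ) : c' j = prevVal n c a p b j := by
  obtain ⟨hap, hpb, hbR, hd, hq2, hact, hq1, hu⟩ := hs
  have hNR : 0 < n * R := Nat.mul_pos (by omega) (by omega)
  have hsym : ∀ i, i < n*R → isActive (c i) = true → i = p := by
    intro i hi hA
    by_contra hne
    rcases Nat.lt_or_ge i a with h'|h'
    · rw [hd i h'] at hA; simp [isActive] at hA
    rcases Nat.lt_or_ge i p with h''|h''
    · rw [hq2 i h' h''] at hA; simp [isActive] at hA
    rcases Nat.lt_or_ge i b with h3|h3
    · rw [hq1 i (by omega) h3] at hA; simp [isActive] at hA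
    · rw [hu i h3 hi] at hA; simp [isActive] at hA
  rcases h with ⟨i, hi, hfp, hrest⟩ | ⟨h1, h2, h3⟩ | ⟨h1, h2, h3⟩
  · rcases fwdPair_spec hfp with ⟨hbb,hx,hy,hz,hw⟩|⟨hbb,hx,hy,hz,hw⟩|⟨hx,hy,hz,hw⟩|⟨hx,hy,hz,hw⟩|
      ⟨hx,hy,hz,hw⟩|⟨hbb,hx,hy,hz,hw⟩|⟨hbb,hx,hy,hz,hw⟩|⟨hx,hy,hz,hw⟩|⟨hbb,hx,hy,hz,hw⟩
    -- inverse of rule 1 : c has (q2, gate) at (i, i+1)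
    · have hip : i + 1 = p := hsym (i+1) (by omega) (by rw [hw]; rfl)
      subst hip
      have hpa : ¬ (i + 1 = a) := by
        intro hh
        have : c i = dead := hd i (by omega)
        rw [hz] at this; cases this
      simp only [prevVal, hw]
      rw [if_neg hpa]
      by_cases hj1 : j = i
      · subst hj1; rw [if_pos (by omega)]; exact hx
      by_cases hj2 : j = i + 1
      · subst hj2; rw [if_neg (by omega), if_pos rfl]; exact hy
      · rw [if_neg (by omega), if_neg hj2]; exact (hrest j hj1 hj2).symm
    -- inverse of rule 2 : c has (q2, turn) at (i, i+1), boundary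
    · have hip : i + 1 = p := hsym (i+1) (by omega) (by rw [hw]; rfl)
      subst hip
      have hpa : ¬ (i + 1 = a) := by
        intro hh
        have : c i = dead := hd i (by omega)
        rw [hz] at this; cases this
      have hmod : (i + 1) % n = 0 := of_decide_eq_true hbb
      simp only [prevVal, hw]
      rw [if_neg hpa]
      by_cases hj1 : j = i
      · subst hj1; rw [if_pos (by omega), if_pos hmod]; exact hx
      by_cases hj2 : j = i + 1
      · subst hj2; rw [if_neg (by omega), if_pos rfl]; exact hy
      · rw [if_neg (by omega), if_neg hj2]; exact (hrest j hj1 hj2).symm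
    -- inverse of rule 3 : c has (lflag, unborn) at (i, i+1)
    · have hip : i = p := hsym i (by omega) (by rw [hz]; rfl)
      subst hip
      have hpb1 : i + 1 = b := by
        rcases Nat.lt_or_ge (i+1) b with h'|h'
        · rw [hq1 (i+1) (by omega) h'] at hw; cases hw
        · omega
      simp only [prevVal, hz]
      rw [if_pos hpb1]
      by_cases hj1 : j = i
      · subst hj1; rw [if_pos rfl]; exact hx
      · rw [if_neg hj1]
        by_cases hj2 : j = i + 1
        · subst hj2; rw [hy, hw]
        · exact (hrest j hj1 hj2).symm
    -- inverse of rule 4 : c has (lflag, q1) at (i, i+1)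
    · have hip : i = p := hsym i (by omega) (by rw [hz]; rfl)
      subst hip
      have hpb1 : ¬ (i + 1 = b) := by
        intro hh
        have : c (i+1) = unborn := hu (i+1) (by omega) hi
        rw [hw] at this; cases this
      simp only [prevVal, hz]
      rw [if_neg hpb1]
      by_cases hj1 : j = i
      · subst hj1; rw [if_pos rfl]; exact hx
      by_cases hj2 : j = i + 1
      · subst hj2; rw [if_neg hj1, if_pos rfl]; exact hy
      · rw [if_neg hj1, if_neg hj2]; exact (hrest j hj1 hj2).symm
    -- inverse of rule 5 : c has (dead, turn) at (i, i+1)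
    · have hip : i + 1 = p := hsym (i+1) (by omega) (by rw [hw]; rfl)
      subst hip
      have hia : i < a := by
        by_contra hh
        have : c i = q2 := hq2 i (by omega) (by omega)
        rw [hz] at this; cases this
      have hpa : i + 1 = a := by omega
      simp only [prevVal, hw]
      rw [if_pos hpa]
      by_cases hj2 : j = i + 1
      · subst hj2; rw [if_pos rfl]; exact hy
      · rw [if_neg hj2]
        by_cases hj1 : j = i
        · subst hj1; rw [hx, hz]
        · exact (hrest j hj1 hj2).symm
    -- inverse of rule 6 : c has (dead, gate) at (i, i+1)
    · have hip : i + 1 = p := hsym (i+1) (by omega) (by rw [hw]; rfl)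
      subst hip
      have hia : i < a := by
        by_contra hh
        have : c i = q2 := hq2 i (by omega) (by omega)
        rw [hz] at this; cases this
      have hpa : i + 1 = a := by omega
      simp only [prevVal, hw]
      rw [if_pos hpa]
      by_cases hj1 : j = i
      · subst hj1; rw [if_pos (by omega)]; exact hx
      by_cases hj2 : j = i + 1
      · subst hj2; rw [if_neg (by omega), if_pos (by omega)]; exact hy
      · rw [if_neg (by omega), if_neg (by omega)]; exact (hrest j hj1 hj2).symm
    -- inverse of rule 6' : c has (dead, rflag) at (i, i+1)
    · have hip : i + 1 = p := hsym (i+1) (by omega) (by rw [hw]; rfl)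
      subst hip
      have hia : i < a := by
        by_contra hh
        have : c i = q2 := hq2 i (by omega) (by omega)
        rw [hz] at this; cases this
      have hpa : i + 1 = a := by omega
      simp only [prevVal, hw]
      rw [if_pos hpa]
      by_cases hj1 : j = i
      · subst hj1; rw [if_pos (by omega)]; exact hx
      by_cases hj2 : j = i + 1
      · subst hj2; rw [if_neg (by omega), if_pos (by omega)]; exact hy
      · rw [if_neg (by omega), if_neg (by omega)]; exact (hrest j hj1 hj2).symm
    -- inverse of rule 7 : c has (q2, rflag) at (i, i+1)
    · have hip : i + 1 = p := hsym (i+1) (by omega) (by rw [hw]; rfl)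
      subst hip
      have hpa : ¬ (i + 1 = a) := by
        intro hh
        have : c i = dead := hd i (by omega)
        rw [hz] at this; cases this
      simp only [prevVal, hw]
      rw [if_neg hpa]
      by_cases hj1 : j = i
      · subst hj1; rw [if_pos (by omega)]; exact hx
      by_cases hj2 : j = i + 1
      · subst hj2; rw [if_neg (by omega), if_pos rfl]; exact hy
      · rw [if_neg (by omega), if_neg hj2]; exact (hrest j hj1 hj2).symm
    -- inverse of rule 8 : c has (q2, turn) at (i, i+1), no boundary
    · have hip : i + 1 = p := hsym (i+1) (by omega) (by rw [hw]; rfl)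
      subst hip
      have hpa : ¬ (i + 1 = a) := by
        intro hh
        have : c i = dead := hd i (by omega)
        rw [hz] at this; cases this
      have hmod : ¬ ((i + 1) % n = 0) := of_decide_eq_false hbb
      simp only [prevVal, hw]
      rw [if_neg hpa]
      by_cases hj1 : j = i
      · subst hj1; rw [if_pos (by omega), if_neg hmod]; exact hx
      by_cases hj2 : j = i + 1
      · subst hj2; rw [if_neg (by omega), if_pos rfl]; exact hy
      · rw [if_neg (by omega), if_neg hj2]; exact (hrest j hj1 hj2).symm
  -- inverse of end-turn rule
  · have hip : n * R - 1 = p := hsym (n*R-1) (by omega) (by rw [h2]; rfl)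
    have hcp : c p = lflag := by rw [← hip]; exact h2
    have hpb1 : p + 1 = b := by omega
    simp only [prevVal, hcp]
    rw [if_pos hpb1]
    by_cases hj1 : j = p
    · subst hj1; rw [if_pos rfl, ← hip]; exact h1
    · rw [if_neg hj1]; exact (h3 j (by omega)).symm
  -- inverse of start-lflag rule
  · have hip : (0:ℕ) = p := hsym 0 hNR (by rw [h2]; rfl)
    have hcp : c p = turn := by rw [← hip]; exact h2
    have hpa : p = a := by omega
    simp only [prevVal, hcp]
    rw [if_pos hpa]
    by_cases hj1 : j = p
    · subst hj1; rw [if_pos rfl, ← hip]; exact h1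
    · rw [if_neg hj1]; exact (h3 j (by omega)).symm

lemma bwd_ex {n R : ℕ} {c : ℕ → LSym} {a p b : ℕ} (hn : 2 ≤ n) (hR : 2 ≤ R)
    (hs : Shape n R c a p b) (hf : LegalForm n c a p b)
    (hni : ¬ (c p = gate ∧ p = 0)) :
    Step n R (prevVal n c a p b) c := by
  obtain ⟨hap, hpb, hbR, hd, hq2, hact, hq1, hu⟩ := hs
  rcases hf with ⟨hcp, hb, hmod⟩|⟨hcp, hb, hmod⟩|⟨hcp, hb⟩|⟨hcp, hb, hor⟩
  · -- gate
    rcases Nat.lt_or_ge a p with hpa|hpa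
    · -- p > a : inverse of rule 1
      left
      refine ⟨p - 1, by omega, ?_, ?_⟩
      · have hpp : p - 1 + 1 = p := by omega
        have e1 : prevVal n c a p b (p-1) = gate := by
          simp only [prevVal, hcp]; rw [if_neg (by omega), if_pos trivial]
        have e2 : prevVal n c a p b (p-1+1) = q1 := by
          simp only [prevVal, hcp]; rw [if_neg (by omega), if_neg (by omega), if_pos hpp]
        have hm : ¬ (p % n = 0) := mod_between (by omega) hmod (by omega) (by omega)
        rw [e1, e2, hpp, hcp, hq2 (p-1) (by omega) (by omega)]
        have : (p - 1 + 1) % n = p % n := by rw [hpp]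
        simp [fwdPair, this, hm]
      · intro j hj1 hj2
        simp only [prevVal, hcp]
        rw [if_neg (by omega), if_neg hj1, if_neg (by omega)]
    · have hpa' : p = a := by omega
      rcases Nat.eq_zero_or_pos a with ha0|ha0
      · exact absurd ⟨hcp, by omega⟩ hni
      · -- p = a > 0 : inverse of rule 6
        left
        refine ⟨a - 1, by omega, ?_, ?_⟩
        · have haa : a - 1 + 1 = a := by omega
          have e1 : prevVal n c a p b (a-1) = turn := by
            simp only [prevVal, hcp]; rw [if_pos hpa', if_pos trivial]
          have e2 : prevVal n c a p b (a-1+1) = q1 := by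
            simp only [prevVal, hcp]; rw [if_pos hpa', if_neg (by omega), if_pos haa]
          have hca : c a = gate := by rw [← hpa']; exact hcp
          rw [e1, e2, haa, hd (a-1) (by omega), hca]
          have hm : (a - 1 + 1) % n = 0 := by rw [haa]; exact hmod
          simp [fwdPair, hm, hmod]
        · intro j hj1 hj2
          simp only [prevVal, hcp]; rw [if_pos hpa', if_neg (by omega), if_neg (by omega)]
  · -- rflag
    rcases Nat.lt_or_ge a p with hpa|hpa
    · left
      refine ⟨p - 1, by omega, ?_, ?_⟩
      · have hpp : p - 1 + 1 = p := by omega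
        have e1 : prevVal n c a p b (p-1) = rflag := by
          simp only [prevVal, hcp]; rw [if_neg (by omega), if_pos trivial]
        have e2 : prevVal n c a p b (p-1+1) = q1 := by
          simp only [prevVal, hcp]; rw [if_neg (by omega), if_neg (by omega), if_pos hpp]
        rw [e1, e2, hpp, hcp, hq2 (p-1) (by omega) (by omega)]
        simp [fwdPair]
      · intro j hj1 hj2
        simp only [prevVal, hcp]
        rw [if_neg (by omega), if_neg hj1, if_neg (by omega)]
    · have hpa' : p = a := by omega
      have ha0 : 0 < a := by
        rcases Nat.eq_zero_or_pos a with h'|h'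
        · rw [h', Nat.zero_mod] at hmod; omega
        · exact h'
      left
      refine ⟨a - 1, by omega, ?_, ?_⟩
      · have haa : a - 1 + 1 = a := by omega
        have e1 : prevVal n c a p b (a-1) = turn := by
          simp only [prevVal, hcp]; rw [if_pos hpa', if_pos trivial]
        have e2 : prevVal n c a p b (a-1+1) = q1 := by
          simp only [prevVal, hcp]; rw [if_pos hpa', if_neg (by omega), if_pos haa]
        have hca : c a = rflag := by rw [← hpa']; exact hcp
        rw [e1, e2, haa, hd (a-1) (by omega), hca]
        have hm : ¬ ((a - 1 + 1) % n = 0) := by rw [haa]; exact hmod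
        simp [fwdPair, hm, hmod]
      · intro j hj1 hj2
        simp only [prevVal, hcp]; rw [if_pos hpa', if_neg (by omega), if_neg (by omega)]
  · -- lflag
    rcases Nat.lt_or_ge (p+1) b with hpb1|hpb1
    · -- inverse of rule 4
      left
      refine ⟨p, by omega, ?_, ?_⟩
      · have e1 : prevVal n c a p b p = q2 := by
          simp only [prevVal, hcp]; rw [if_neg (by omega), if_pos trivial]
        have e2 : prevVal n c a p b (p+1) = lflag := by
          simp only [prevVal, hcp]; rw [if_neg (by omega), if_neg (by omega), if_pos trivial]
        rw [e1, e2, hcp, hq1 (p+1) (by omega) hpb1]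
        simp [fwdPair]
      · intro j hj1 hj2
        simp only [prevVal, hcp]; rw [if_neg (by omega), if_neg hj1, if_neg hj2]
    · have hpb1' : p + 1 = b := by omega
      rcases Nat.lt_or_ge b (n * R) with hblt|hbge
      · -- inverse of rule 3
        left
        refine ⟨p, by omega, ?_, ?_⟩
        · have e1 : prevVal n c a p b p = turn := by
            simp only [prevVal, hcp]; rw [if_pos hpb1', if_pos trivial]
          have e2 : prevVal n c a p b (p+1) = unborn := by
            simp only [prevVal, hcp]; rw [if_pos hpb1', if_neg (by omega)]
            exact hu (p+1) (by omega) (by omega)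
          rw [e1, e2, hcp, hu (p+1) (by omega) (by omega)]
          simp [fwdPair]
        · intro j hj1 hj2
          simp only [prevVal, hcp]; rw [if_pos hpb1', if_neg hj1]
      · -- inverse of end-turn rule
        have hbeq : b = n * R := by omega
        right; left
        have hpnr : n * R - 1 = p := by omega
        refine ⟨?_, by rw [hpnr]; exact hcp, ?_⟩
        · rw [hpnr]; simp only [prevVal, hcp]; rw [if_pos hpb1', if_pos trivial]
        · intro j hj
          simp only [prevVal, hcp]; rw [if_pos hpb1', if_neg (by omega)]
  · -- turn
    rcases hor with hpa|hpb1
    · rcases Nat.eq_zero_or_pos a with ha0|ha0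
      · -- p = a = 0 : inverse of start rule
        right; right
        refine ⟨?_, by rw [show (0:ℕ) = p by omega]; exact hcp, ?_⟩
        · rw [show (0:ℕ) = p by omega]
          simp only [prevVal, hcp]; rw [if_pos hpa, if_pos trivial]
        · intro j hj
          simp only [prevVal, hcp]; rw [if_pos hpa, if_neg (by omega)]
      · -- p = a > 0 : inverse of rule 5
        left
        refine ⟨a - 1, by omega, ?_, ?_⟩
        · have haa : a - 1 + 1 = a := by omega
          have e1 : prevVal n c a p b (a-1) = dead := by
            simp only [prevVal, hcp]; rw [if_pos hpa, if_neg (by omega)]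
            exact hd (a-1) (by omega)
          have e2 : prevVal n c a p b (a-1+1) = lflag := by
            simp only [prevVal, hcp]; rw [if_pos hpa, if_pos (by omega)]
          have hca : c a = turn := by rw [← hpa]; exact hcp
          rw [e1, e2, haa, hd (a-1) (by omega), hca]
          simp [fwdPair]
        · intro j hj1 hj2
          simp only [prevVal, hcp]; rw [if_pos hpa, if_neg (by omega)]
    · -- p + 1 = b : inverse of rules 2 / 8
      have hpa : ¬ (p = a) := by omega
      left
      refine ⟨p - 1, by omega, ?_, ?_⟩
      · have hpp : p - 1 + 1 = p := by omega
        have e1 : prevVal n c a p b (p-1) = (if p % n = 0 then gate else rflag) := by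
          simp only [prevVal, hcp]; rw [if_neg hpa, if_pos trivial]
        have e2 : prevVal n c a p b (p-1+1) = unborn := by
          simp only [prevVal, hcp]; rw [if_neg hpa, if_neg (by omega), if_pos hpp]
        rw [e1, e2, hpp, hcp, hq2 (p-1) (by omega) (by omega)]
        have hmm : (p - 1 + 1) % n = p % n := by rw [hpp]
        by_cases hm : p % n = 0 <;> simp [fwdPair, hmm, hm]
      · intro j hj1 hj2
        simp only [prevVal, hcp]; rw [if_neg hpa, if_neg hj1, if_neg (by omega)]

set_option maxHeartbeats 1000000

def seg (n a r : ℕ) : ℕ → LSym :=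
  if r < n then cfg a (a+r) (a+n) (if a % n = 0 then gate else rflag)
  else if r = n then cfg a (a+n) (a+n+1) turn
  else if r < 2*n+2 then cfg a (a+2*n+1-r) (a+n+1) lflag
  else cfg a a (a+n+1) turn

def gamma (n t : ℕ) : ℕ → LSym := seg n (t / (2*n+3)) (t % (2*n+3))

lemma gamma_eq {n a r : ℕ} (h : r < 2*n+3) : gamma n ((2*n+3)*a + r) = seg n a r := by
  unfold gamma
  rw [Nat.mul_add_div (by omega), Nat.mul_add_mod, Nat.div_eq_of_lt h, Nat.mod_eq_of_lt h,
    Nat.add_zero]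

lemma next_cfg_move {n a p b : ℕ} {s : LSym} (hs : s = gate ∨ s = rflag)
    (hap : a ≤ p) (hpb : p + 1 < b) :
    nextVal n (cfg a p b s) a p b = cfg a (p+1) b s := by
  have hcp : cfg a p b s p = s := cfg_self _ hap
  funext j
  rcases hs with rfl|rfl <;>
  · simp only [nextVal, hcp]; simp only [cfg]
    split_ifs <;> first | rfl | omega

lemma next_cfg_grow {n a p b : ℕ} {s : LSym} (hs : s = gate ∨ s = rflag)
    (hap : a ≤ p) (hpb : p + 1 = b) :
    nextVal n (cfg a p b s) a p b = cfg a (p+1) (b+1) turn := by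
  have hcp : cfg a p b s p = s := cfg_self _ hap
  funext j
  rcases hs with rfl|rfl <;>
  · simp only [nextVal, hcp]; simp only [cfg]
    split_ifs <;> first | rfl | omega

lemma next_cfg_turn_lflag {n a p b : ℕ} (hap : a < p) (hpb : p + 1 = b) :
    nextVal n (cfg a p b turn) a p b = cfg a p b lflag := by
  have hcp : cfg a p b turn p = turn := cfg_self _ (by omega)
  funext j
  simp only [nextVal, hcp]; simp only [cfg]
  split_ifs <;> first | rfl | omega

lemma next_cfg_lmove {n a p b : ℕ} (hap : a < p) (hpb : p < b) :
    nextVal n (cfg a p b lflag) a p b = cfg a (p-1) b lflag := by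
  have hcp : cfg a p b lflag p = lflag := cfg_self _ (by omega)
  funext j
  simp only [nextVal, hcp]; simp only [cfg]
  split_ifs <;> first | rfl | omega

lemma next_cfg_lflag_turn {n a b : ℕ} :
    nextVal n (cfg a a b lflag) a a b = cfg a a b turn := by
  have hcp : cfg a a b lflag a = lflag := cfg_self _ le_rfl
  funext j
  simp only [nextVal, hcp]; simp only [cfg]
  split_ifs <;> first | rfl | omega

lemma next_cfg_spawn {n a b : ℕ} (hb : a + 1 < b) :
    nextVal n (cfg a a b turn) a a b =
      cfg (a+1) (a+1) b (if (a+1) % n = 0 then gate else rflag) := by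
  have hcp : cfg a a b turn a = turn := cfg_self _ le_rfl
  funext j
  by_cases hm : (a+1) % n = 0 <;>
  · simp only [nextVal, hcp, hm]; simp only [cfg]
    split_ifs <;> first | rfl | omega

lemma bound_split {n R' a r t : ℕ} (hd : (2*n+3)*a + r = t)
    (ht : t < (2*n+3)*(n*R') + (n-1)) : a < n*R' ∨ (a = n*R' ∧ r < n-1) := by
  rcases Nat.lt_trichotomy a (n*R') with h|h|h
  · exact Or.inl h
  · right; refine ⟨h, ?_⟩; rw [h] at hd; omega
  · exfalso
    have h2 : (2*n+3) * (n*R'+1) ≤ (2*n+3) * a := Nat.mul_le_mul_left _ h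
    have h3 : (2*n+3) * (n*R'+1) = (2*n+3)*(n*R') + (2*n+3) := by ring
    omega

lemma bound_split_le {n R' a r t : ℕ} (hd : (2*n+3)*a + r = t)
    (ht : t ≤ (2*n+3)*(n*R') + (n-1)) : a < n*R' ∨ (a = n*R' ∧ r ≤ n-1) := by
  rcases Nat.lt_trichotomy a (n*R') with h|h|h
  · exact Or.inl h
  · right; refine ⟨h, ?_⟩; rw [h] at hd; omega
  · exfalso
    have h2 : (2*n+3) * (n*R'+1) ≤ (2*n+3) * a := Nat.mul_le_mul_left _ h
    have h3 : (2*n+3) * (n*R'+1) = (2*n+3)*(n*R') + (2*n+3) := by ring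
    omega

lemma path_step {n R : ℕ} (hn : 2 ≤ n) (hR : 2 ≤ R) {t : ℕ}
    (ht : t < (2*n+3)*(n*(R-1)) + (n-1)) :
    Step n R (gamma n t) (gamma n (t+1)) := by
  obtain ⟨a, r, hd, hrlt⟩ : ∃ a r, (2*n+3)*a + r = t ∧ r < 2*n+3 :=
    ⟨t / (2*n+3), t % (2*n+3), Nat.div_add_mod t (2*n+3), Nat.mod_lt _ (by omega)⟩
  subst hd
  have hNR : n * R = n*(R-1) + n := by
    have h' : R - 1 + 1 = R := by omega
    calc n * R = n * (R-1+1) := by rw [h']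
    _ = n*(R-1) + n := by ring
  have hbound := bound_split rfl ht
  have habound : a ≤ n*(R-1) := by rcases hbound with h|h; omega; omega
  have e1 : gamma n ((2*n+3)*a + r) = seg n a r := gamma_eq hrlt
  rw [e1]
  rcases Nat.lt_or_ge (r+1) n with hc|hc
  · -- A : active moves right within string
    have e2 : gamma n ((2*n+3)*a + r + 1) = seg n a (r+1) := by
      rw [show (2*n+3)*a + r + 1 = (2*n+3)*a + (r+1) by omega]
      exact gamma_eq (by omega)
    rw [e2]
    have hseg1 : seg n a r = cfg a (a+r) (a+n) (if a % n = 0 then gate else rflag) := by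
      unfold seg; rw [if_pos (by omega)]
    have hseg2 : seg n a (r+1) = cfg a (a+r+1) (a+n) (if a % n = 0 then gate else rflag) := by
      unfold seg; rw [if_pos hc, show a + (r+1) = a + r + 1 by omega]
    rw [hseg1, hseg2]
    have hstep := fwd_ex hn hR
      (cfg_shape (show a ≤ a+r by omega) (show a+r < a+n by omega) (by omega)
        (by by_cases hm : a % n = 0 <;> simp [hm, isActive]))
      (show LegalForm n (cfg a (a+r) (a+n) (if a % n = 0 then gate else rflag)) a (a+r) (a+n) by
        by_cases hm : a % n = 0
        · exact Or.inl ⟨by rw [cfg_self _ (by omega), if_pos hm], rfl, hm⟩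
        · exact Or.inr (Or.inl ⟨by rw [cfg_self _ (by omega), if_neg hm], rfl, hm⟩))
      (by rintro ⟨_, h2, _⟩; omega)
    rwa [next_cfg_move (by by_cases hm : a % n = 0 <;> simp [hm]) (by omega) (by omega)] at hstep
  rcases Nat.eq_or_lt_of_le hc with hc1|hc1
  · -- B : active reaches block end, spawns turn
    have halt : a < n*(R-1) := by rcases hbound with h|h; exact h; omega
    have e2 : gamma n ((2*n+3)*a + r + 1) = seg n a (r+1) := by
      rw [show (2*n+3)*a + r + 1 = (2*n+3)*a + (r+1) by omega]
      exact gamma_eq (by omega)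
    rw [e2]
    have hseg1 : seg n a r = cfg a (a+r) (a+n) (if a % n = 0 then gate else rflag) := by
      unfold seg; rw [if_pos (by omega)]
    have hseg2 : seg n a (r+1) = cfg a (a+r+1) (a+n+1) turn := by
      unfold seg
      rw [if_neg (by omega), if_pos (by omega), show a + r + 1 = a + n by omega]
    rw [hseg1, hseg2]
    have hstep := fwd_ex hn hR
      (cfg_shape (show a ≤ a+r by omega) (show a+r < a+n by omega) (by omega)
        (by by_cases hm : a % n = 0 <;> simp [hm, isActive]))
      (show LegalForm n (cfg a (a+r) (a+n) (if a % n = 0 then gate else rflag)) a (a+r) (a+n) by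
        by_cases hm : a % n = 0
        · exact Or.inl ⟨by rw [cfg_self _ (by omega), if_pos hm], rfl, hm⟩
        · exact Or.inr (Or.inl ⟨by rw [cfg_self _ (by omega), if_neg hm], rfl, hm⟩))
      (by rintro ⟨_, _, h3⟩; omega)
    rwa [next_cfg_grow (by by_cases hm : a % n = 0 <;> simp [hm]) (by omega) (by omega)] at hstep
  rcases Nat.eq_or_lt_of_le (show n ≤ r by omega) with hc2|hc2
  · -- C : turn at right end becomes lflag
    have halt : a < n*(R-1) := by rcases hbound with h|h; exact h; omega
    have e2 : gamma n ((2*n+3)*a + r + 1) = seg n a (r+1) := by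
      rw [show (2*n+3)*a + r + 1 = (2*n+3)*a + (r+1) by omega]
      exact gamma_eq (by omega)
    rw [e2]
    have hseg1 : seg n a r = cfg a (a+n) (a+n+1) turn := by
      unfold seg; rw [if_neg (by omega), if_pos (by omega)]
    have hseg2 : seg n a (r+1) = cfg a (a+n) (a+n+1) lflag := by
      unfold seg
      rw [if_neg (by omega), if_neg (by omega), if_pos (by omega),
        show a + 2*n+1-(r+1) = a + n by omega]
    rw [hseg1, hseg2]
    have hstep := fwd_ex hn hR
      (cfg_shape (show a ≤ a+n by omega) (show a+n < a+n+1 by omega) (by omega) (show isActive LSym.turn = true from rfl))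
      (show LegalForm n (cfg a (a+n) (a+n+1) turn) a (a+n) (a+n+1) from
        Or.inr (Or.inr (Or.inr ⟨cfg_self _ (by omega), rfl, Or.inr rfl⟩)))
      (by rintro ⟨h1, _, _⟩; rw [cfg_self _ (by omega)] at h1; cases h1)
    rwa [next_cfg_turn_lflag (by omega) rfl] at hstep
  rcases Nat.lt_or_ge r (2*n+1) with hc3|hc3
  · -- D : lflag moves left
    have halt : a < n*(R-1) := by rcases hbound with h|h; exact h; omega
    have e2 : gamma n ((2*n+3)*a + r + 1) = seg n a (r+1) := by
      rw [show (2*n+3)*a + r + 1 = (2*n+3)*a + (r+1) by omega]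
      exact gamma_eq (by omega)
    rw [e2]
    have hseg1 : seg n a r = cfg a (a+2*n+1-r) (a+n+1) lflag := by
      unfold seg; rw [if_neg (by omega), if_neg (by omega), if_pos (by omega)]
    have hseg2 : seg n a (r+1) = cfg a (a+2*n+1-r-1) (a+n+1) lflag := by
      unfold seg
      rw [if_neg (by omega), if_neg (by omega), if_pos (by omega),
        show a + 2*n+1-(r+1) = a + 2*n+1-r-1 by omega]
    rw [hseg1, hseg2]
    have hstep := fwd_ex hn hR
      (cfg_shape (show a ≤ a+2*n+1-r by omega) (show a+2*n+1-r < a+n+1 by omega) (by omega) (show isActive LSym.lflag = true from rfl))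
      (show LegalForm n (cfg a (a+2*n+1-r) (a+n+1) lflag) a (a+2*n+1-r) (a+n+1) from
        Or.inr (Or.inr (Or.inl ⟨cfg_self _ (by omega), rfl⟩)))
      (by rintro ⟨h1, _, _⟩; rw [cfg_self _ (by omega)] at h1; cases h1)
    rwa [next_cfg_lmove (by omega) (by omega)] at hstep
  rcases Nat.eq_or_lt_of_le hc3 with hc4|hc4
  · -- E : lflag at left end becomes turn
    have halt : a < n*(R-1) := by rcases hbound with h|h; exact h; omega
    have e2 : gamma n ((2*n+3)*a + r + 1) = seg n a (r+1) := by
      rw [show (2*n+3)*a + r + 1 = (2*n+3)*a + (r+1) by omega]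
      exact gamma_eq (by omega)
    rw [e2]
    have hseg1 : seg n a r = cfg a a (a+n+1) lflag := by
      unfold seg
      rw [if_neg (by omega), if_neg (by omega), if_pos (by omega),
        show a + 2*n+1-r = a by omega]
    have hseg2 : seg n a (r+1) = cfg a a (a+n+1) turn := by
      unfold seg; rw [if_neg (by omega), if_neg (by omega), if_neg (by omega)]
    rw [hseg1, hseg2]
    have hstep := fwd_ex hn hR
      (cfg_shape (show a ≤ a by omega) (show a < a+n+1 by omega) (by omega) (show isActive LSym.lflag = true from rfl))
      (show LegalForm n (cfg a a (a+n+1) lflag) a a (a+n+1) from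
        Or.inr (Or.inr (Or.inl ⟨cfg_self _ le_rfl, rfl⟩)))
      (by rintro ⟨h1, _, _⟩; rw [cfg_self _ le_rfl] at h1; cases h1)
    rwa [next_cfg_lflag_turn] at hstep
  · -- F : turn at left end dies, spawns next active
    have halt : a < n*(R-1) := by rcases hbound with h|h; exact h; omega
    have hc5 : r = 2*n+2 := by omega
    have e2 : gamma n ((2*n+3)*a + r + 1) = seg n (a+1) 0 := by
      have harith : (2*n+3)*(a+1) = (2*n+3)*a + (2*n+3) := by ring
      have h' : (2*n+3)*a + r + 1 = (2*n+3)*(a+1) + 0 := by omega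
      rw [h']; exact gamma_eq (by omega)
    rw [e2]
    have hseg1 : seg n a r = cfg a a (a+n+1) turn := by
      unfold seg; rw [if_neg (by omega), if_neg (by omega), if_neg (by omega)]
    have hseg2 : seg n (a+1) 0 = cfg (a+1) (a+1) (a+n+1) (if (a+1) % n = 0 then gate else rflag) := by
      unfold seg
      rw [if_pos (by omega), show a+1+0 = a+1 by omega, show a+1+n = a+n+1 by omega]
    rw [hseg1, hseg2]
    have hstep := fwd_ex hn hR
      (cfg_shape (show a ≤ a by omega) (show a < a+n+1 by omega) (by omega) (show isActive LSym.turn = true from rfl))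
      (show LegalForm n (cfg a a (a+n+1) turn) a a (a+n+1) from
        Or.inr (Or.inr (Or.inr ⟨cfg_self _ le_rfl, rfl, Or.inl rfl⟩)))
      (by rintro ⟨h1, _, _⟩; rw [cfg_self _ le_rfl] at h1; cases h1)
    rwa [next_cfg_spawn (by omega)] at hstep

lemma shape_agree {n R : ℕ} {c : ℕ → LSym} {a p b : ℕ} (hs : Shape n R c a p b) :
    ∀ i, i < n*R → c i = cfg a p b (c p) i := by
  obtain ⟨hap,hpb,hbR,hd,hq2,hact,hq1,hu⟩ := hs
  intro i hi
  simp only [cfg]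
  split_ifs with h1 h2 h3 h4
  · exact hd i h1
  · exact hq2 i (by omega) h2
  · rw [h3]
  · exact hq1 i (by omega) h4
  · exact hu i (by omega) hi

lemma legal_of_agree {n R : ℕ} {c d : ℕ → LSym} {a p b : ℕ}
    (hag : ∀ i, i < n*R → c i = d i) (hs : Shape n R d a p b) (hf : LegalForm n d a p b) :
    Shape n R c a p b ∧ LegalForm n c a p b := by
  obtain ⟨hap,hpb,hbR,hd,hq2,hact,hq1,hu⟩ := hs
  have hcp : c p = d p := hag p (by omega)
  constructor
  · refine ⟨hap,hpb,hbR, ?_, ?_, ?_, ?_, ?_⟩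
    · intro i hi; rw [hag i (by omega)]; exact hd i hi
    · intro i hi hi2; rw [hag i (by omega)]; exact hq2 i hi hi2
    · rw [hcp]; exact hact
    · intro i hi hi2; rw [hag i (by omega)]; exact hq1 i hi hi2
    · intro i hi hi2; rw [hag i hi2]; exact hu i hi hi2
  · rcases hf with ⟨h1,h2,h3⟩|⟨h1,h2,h3⟩|⟨h1,h2⟩|⟨h1,h2,h3⟩
    · exact Or.inl ⟨by rw [hcp]; exact h1, h2, h3⟩
    · exact Or.inr (Or.inl ⟨by rw [hcp]; exact h1, h2, h3⟩)
    · exact Or.inr (Or.inr (Or.inl ⟨by rw [hcp]; exact h1, h2⟩))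
    · exact Or.inr (Or.inr (Or.inr ⟨by rw [hcp]; exact h1, h2, h3⟩))

lemma legal_time {n R : ℕ} {c : ℕ → LSym} (hn : 2 ≤ n) (hR : 2 ≤ R) (hc : Legal n R c) :
    ∃ t, t ≤ (2*n+3)*(n*(R-1)) + (n-1) ∧ ∀ i, i < n*R → c i = gamma n t i := by
  obtain ⟨a,p,b,hs,hf⟩ := hc
  have hag := shape_agree hs
  obtain ⟨hap,hpb,hbR,hd,hq2,hact,hq1,hu⟩ := hs
  have hNR : n * R = n*(R-1) + n := by
    have h' : R - 1 + 1 = R := by omega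
    calc n * R = n * (R-1+1) := by rw [h']
    _ = n*(R-1) + n := by ring
  rcases hf with ⟨hcp,hb,hmod⟩|⟨hcp,hb,hmod⟩|⟨hcp,hb⟩|⟨hcp,hb,hor⟩
  · -- gate
    refine ⟨(2*n+3)*a + (p-a), ?_, ?_⟩
    · have h1 : a ≤ n*(R-1) := by omega
      have h2 : (2*n+3)*a ≤ (2*n+3)*(n*(R-1)) := Nat.mul_le_mul_left _ h1
      omega
    · intro i hi
      rw [hag i hi, hcp, gamma_eq (show p - a < 2*n+3 by omega)]
      have hseg : seg n a (p-a) = cfg a (a+(p-a)) (a+n) (if a % n = 0 then gate else rflag) := by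
        unfold seg; rw [if_pos (by omega)]
      rw [hseg, if_pos hmod, show a + (p-a) = p by omega, ← hb]
  · -- rflag
    refine ⟨(2*n+3)*a + (p-a), ?_, ?_⟩
    · have h1 : a ≤ n*(R-1) := by omega
      have h2 : (2*n+3)*a ≤ (2*n+3)*(n*(R-1)) := Nat.mul_le_mul_left _ h1
      omega
    · intro i hi
      rw [hag i hi, hcp, gamma_eq (show p - a < 2*n+3 by omega)]
      have hseg : seg n a (p-a) = cfg a (a+(p-a)) (a+n) (if a % n = 0 then gate else rflag) := by
        unfold seg; rw [if_pos (by omega)]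
      rw [hseg, if_neg hmod, show a + (p-a) = p by omega, ← hb]
  · -- lflag
    refine ⟨(2*n+3)*a + (2*n+1-(p-a)), ?_, ?_⟩
    · have h1 : a + 1 ≤ n*(R-1) := by omega
      have h2 : (2*n+3)*(a+1) ≤ (2*n+3)*(n*(R-1)) := Nat.mul_le_mul_left _ h1
      have h3 : (2*n+3)*(a+1) = (2*n+3)*a + (2*n+3) := by ring
      omega
    · intro i hi
      rw [hag i hi, hcp, gamma_eq (show 2*n+1-(p-a) < 2*n+3 by omega)]
      have hseg : seg n a (2*n+1-(p-a)) =
          cfg a (a+2*n+1-(2*n+1-(p-a))) (a+n+1) lflag := by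
        unfold seg; rw [if_neg (by omega), if_neg (by omega), if_pos (by omega)]
      rw [hseg, show a+2*n+1-(2*n+1-(p-a)) = p by omega, ← hb]
  · -- turn
    rcases hor with hor|hor
    · refine ⟨(2*n+3)*a + (2*n+2), ?_, ?_⟩
      · have h1 : a + 1 ≤ n*(R-1) := by omega
        have h2 : (2*n+3)*(a+1) ≤ (2*n+3)*(n*(R-1)) := Nat.mul_le_mul_left _ h1
        have h3 : (2*n+3)*(a+1) = (2*n+3)*a + (2*n+3) := by ring
        omega
      · intro i hi
        rw [hag i hi, hcp, gamma_eq (show 2*n+2 < 2*n+3 by omega)]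
        have hseg : seg n a (2*n+2) = cfg a a (a+n+1) turn := by
          unfold seg; rw [if_neg (by omega), if_neg (by omega), if_neg (by omega)]
        rw [hseg, hor, ← hb]
    · refine ⟨(2*n+3)*a + n, ?_, ?_⟩
      · have h1 : a + 1 ≤ n*(R-1) := by omega
        have h2 : (2*n+3)*(a+1) ≤ (2*n+3)*(n*(R-1)) := Nat.mul_le_mul_left _ h1
        have h3 : (2*n+3)*(a+1) = (2*n+3)*a + (2*n+3) := by ring
        omega
      · intro i hi
        rw [hag i hi, hcp, gamma_eq (show n < 2*n+3 by omega)]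
        have hseg : seg n a n = cfg a (a+n) (a+n+1) turn := by
          unfold seg; rw [if_neg (by omega), if_pos rfl]
        rw [hseg, show a + n = p by omega, hor]

lemma time_legal {n R : ℕ} {t : ℕ} (hn : 2 ≤ n) (hR : 2 ≤ R)
    (ht : t ≤ (2*n+3)*(n*(R-1)) + (n-1)) : Legal n R (gamma n t) := by
  obtain ⟨a, r, hd, hrlt⟩ : ∃ a r, (2*n+3)*a + r = t ∧ r < 2*n+3 :=
    ⟨t / (2*n+3), t % (2*n+3), Nat.div_add_mod t (2*n+3), Nat.mod_lt _ (by omega)⟩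
  subst hd
  have hNR : n * R = n*(R-1) + n := by
    have h' : R - 1 + 1 = R := by omega
    calc n * R = n * (R-1+1) := by rw [h']
    _ = n*(R-1) + n := by ring
  have hbound := bound_split_le rfl ht
  have habound : a ≤ n*(R-1) := by rcases hbound with h|h; omega; omega
  rw [gamma_eq hrlt]
  rcases Nat.lt_or_ge r n with hc|hc
  · have hseg : seg n a r = cfg a (a+r) (a+n) (if a % n = 0 then gate else rflag) := by
      unfold seg; rw [if_pos hc]
    rw [hseg]
    refine ⟨a, a+r, a+n, cfg_shape (by omega) (by omega) (by omega)
      (by by_cases hm : a % n = 0 <;> simp [hm, isActive]), ?_⟩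
    by_cases hm : a % n = 0
    · exact Or.inl ⟨by rw [cfg_self _ (by omega), if_pos hm], rfl, hm⟩
    · exact Or.inr (Or.inl ⟨by rw [cfg_self _ (by omega), if_neg hm], rfl, hm⟩)
  have halt : a < n*(R-1) := by rcases hbound with h|h; exact h; omega
  rcases Nat.eq_or_lt_of_le hc with hc2|hc2
  · have hseg : seg n a r = cfg a (a+n) (a+n+1) turn := by
      unfold seg; rw [if_neg (by omega), if_pos (by omega)]
    rw [hseg]
    exact ⟨a, a+n, a+n+1, cfg_shape (by omega) (by omega) (by omega)
      (show isActive LSym.turn = true from rfl),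
      Or.inr (Or.inr (Or.inr ⟨cfg_self _ (by omega), rfl, Or.inr rfl⟩))⟩
  rcases Nat.lt_or_ge r (2*n+2) with hc3|hc3
  · have hseg : seg n a r = cfg a (a+2*n+1-r) (a+n+1) lflag := by
      unfold seg; rw [if_neg (by omega), if_neg (by omega), if_pos hc3]
    rw [hseg]
    exact ⟨a, a+2*n+1-r, a+n+1, cfg_shape (by omega) (by omega) (by omega)
      (show isActive LSym.lflag = true from rfl),
      Or.inr (Or.inr (Or.inl ⟨cfg_self _ (by omega), rfl⟩))⟩
  · have hseg : seg n a r = cfg a a (a+n+1) turn := by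
      unfold seg; rw [if_neg (by omega), if_neg (by omega), if_neg (by omega)]
    rw [hseg]
    exact ⟨a, a, a+n+1, cfg_shape (by omega) (by omega) (by omega)
      (show isActive LSym.turn = true from rfl),
      Or.inr (Or.inr (Or.inr ⟨cfg_self _ le_rfl, rfl, Or.inl rfl⟩))⟩

lemma final_is {n R : ℕ} {c : ℕ → LSym} {a p b : ℕ} (hn : 2 ≤ n) (hR : 2 ≤ R)
    (hs : Shape n R c a p b) (hcp : c p = gate) (hb1 : p + 1 = b) (hb2 : b = n * R)
    (hb3 : b = a + n) : ∀ i, i < n*R → c i = FinalC n R i := by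
  obtain ⟨hap,hpb,hbR,hd,hq2,hact,hq1,hu⟩ := hs
  have hNR : n * R = n*(R-1) + n := by
    have h' : R - 1 + 1 = R := by omega
    calc n * R = n * (R-1+1) := by rw [h']
    _ = n*(R-1) + n := by ring
  have haeq : a = n*(R-1) := by omega
  intro i hi
  unfold FinalC
  split_ifs with h1 h2
  · rw [show i = p by omega]; exact hcp
  · exact hq2 i (by omega) (by omega)
  · exact hd i (by omega)

lemma init_is {n R : ℕ} {c : ℕ → LSym} {a p b : ℕ} (hn : 2 ≤ n) (hR : 2 ≤ R)
    (hs : Shape n R c a p b) (hcp : c p = gate) (hp0 : p = 0) (hb : b = a + n) :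
    ∀ i, i < n*R → c i = InitC n i := by
  obtain ⟨hap,hpb,hbR,hd,hq2,hact,hq1,hu⟩ := hs
  have ha0 : a = 0 := by omega
  intro i hi
  unfold InitC
  split_ifs with h1 h2
  · rw [show i = p by omega]; exact hcp
  · exact hq1 i (by omega) (by omega)
  · exact hu i (by omega) hi

end LPath

/-- Every legal configuration other than the final one has exactly one
applicable forward transition, every legal configuration other than the initial
one has exactly one applicable backward transition, and consequently the legal
configurations form a single directed path of length `K = n(2n+3)(R−1)+n−1`
under the transition relation, from the initial to the final configuration. -/
theorem legal_configurations_form_path (n R : ℕ) (hn : 2 ≤ n) (hR : 2 ≤ R) :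
    (∀ c : ℕ → LSym, Legal n R c → (∃ i, i < n * R ∧ c i ≠ FinalC n R i) →
      ∃! c' : ℕ → LSym, Step n R c c') ∧
    (∀ c : ℕ → LSym, Legal n R c → (∃ i, i < n * R ∧ c i ≠ InitC n i) →
      ∃! c' : ℕ → LSym, Step n R c' c) ∧
    (∃ γ : Fin (n * (2 * n + 3) * (R - 1) + n - 1 + 1) → (ℕ → LSym),
      (∀ i, i < n * R → γ 0 i = InitC n i) ∧
      (∀ i, i < n * R → γ (Fin.last (n * (2 * n + 3) * (R - 1) + n - 1)) i = FinalC n R i) ∧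
      (∀ t : Fin (n * (2 * n + 3) * (R - 1) + n - 1),
        Step n R (γ t.castSucc) (γ t.succ)) ∧
      (∀ c : ℕ → LSym, Legal n R c ↔ ∃ t, ∀ i, i < n * R → c i = γ t i)) := by
  have hK : n * (2 * n + 3) * (R - 1) + n - 1 = (2*n+3)*(n*(R-1)) + (n-1) := by
    have h : n * (2 * n + 3) * (R - 1) = (2*n+3)*(n*(R-1)) := by ring
    omega
  have hNR : n * R = n*(R-1) + n := by
    have h' : R - 1 + 1 = R := by omega
    calc n * R = n * (R-1+1) := by rw [h']
    _ = n*(R-1) + n := by ring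
  refine ⟨?_, ?_, ?_⟩
  · rintro c ⟨a,p,b,hs,hf⟩ hne
    refine ⟨LPath.nextVal n c a p b, LPath.fwd_ex hn hR hs hf ?_,
      fun y hy => funext (fun j => LPath.fwd_det hn hR hs hf hy j)⟩
    rintro ⟨h1,h2,h3⟩
    have hb : b = a + n := by
      rcases hf with ⟨_,hb',_⟩|⟨hcp,_,_⟩|⟨hcp,_⟩|⟨hcp,_,_⟩
      · exact hb'
      · rw [h1] at hcp; cases hcp
      · rw [h1] at hcp; cases hcp
      · rw [h1] at hcp; cases hcp
    obtain ⟨i, hi, hne'⟩ := hne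
    exact hne' (LPath.final_is hn hR hs h1 h2 h3 hb i hi)
  · rintro c ⟨a,p,b,hs,hf⟩ hne
    refine ⟨LPath.prevVal n c a p b, LPath.bwd_ex hn hR hs hf ?_,
      fun y hy => funext (fun j => LPath.bwd_det hn hR hs hf hy j)⟩
    rintro ⟨h1,h2⟩
    have hb : b = a + n := by
      rcases hf with ⟨_,hb',_⟩|⟨hcp,_,_⟩|⟨hcp,_⟩|⟨hcp,_,_⟩
      · exact hb'
      · rw [h1] at hcp; cases hcp
      · rw [h1] at hcp; cases hcp
      · rw [h1] at hcp; cases hcp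
    obtain ⟨i, hi, hne'⟩ := hne
    exact hne' (LPath.init_is hn hR hs h1 h2 hb i hi)
  · refine ⟨fun t => LPath.gamma n t.val, ?_, ?_, ?_, ?_⟩
    · intro i hi
      show LPath.gamma n _ i = _
      rw [Fin.val_zero]
      have hg : LPath.gamma n 0 = LPath.seg n 0 0 := by
        have h := LPath.gamma_eq (n := n) (a := 0) (r := 0) (by omega)
        simpa using h
      rw [hg]
      have hseg : LPath.seg n 0 0 =
          LPath.cfg 0 (0+0) (0+n) (if 0 % n = 0 then gate else rflag) := by
        unfold LPath.seg; rw [if_pos (by omega)]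
      rw [hseg, if_pos (by simp)]
      unfold LPath.cfg InitC
      split_ifs <;> first | rfl | omega
    · intro i hi
      show LPath.gamma n _ i = _
      rw [Fin.val_last, hK,
        LPath.gamma_eq (n := n) (a := n*(R-1)) (r := n-1) (by omega)]
      have hseg : LPath.seg n (n*(R-1)) (n-1) =
          LPath.cfg (n*(R-1)) (n*(R-1)+(n-1)) (n*(R-1)+n)
            (if (n*(R-1)) % n = 0 then gate else rflag) := by
        unfold LPath.seg; rw [if_pos (by omega)]
      rw [hseg, if_pos (Nat.mul_mod_right n (R-1))]
      unfold LPath.cfg FinalC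
      split_ifs <;> first | rfl | omega
    · intro t
      have hlt : (t.castSucc).val < (2*n+3)*(n*(R-1)) + (n-1) := by
        have h := t.isLt
        have h2 : (t.castSucc).val = t.val := Fin.coe_castSucc t
        omega
      exact LPath.path_step hn hR hlt
    · intro c
      constructor
      · intro hc
        obtain ⟨t, htle, hag⟩ := LPath.legal_time hn hR hc
        exact ⟨⟨t, by omega⟩, fun i hi => hag i hi⟩
      · rintro ⟨t, hag⟩
        have hl := LPath.time_legal (t := t.val) hn hR (by have := t.isLt; omega)
        obtain ⟨a,p,b,hs,hf⟩ := hl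
        obtain ⟨hs', hf'⟩ := LPath.legal_of_agree hag hs hf
        exact ⟨a,p,b,hs',hf'⟩
end

section
/- Any configuration of the 12-state line construction that violates none of the local penalty rules in groups 1 through 6 either is a legal configuration, or belongs to one of the following three exceptional families: (i) the qubit string has the form 2⋯2 t 1⋯1 with the turn flag strictly in the interior; (ii) the qubit string has incorrect length (different from n when the active site is g or r, or different from n+1 when the active site is l or t); or (iii) the qubit string has length n but the active site is r with the string aligned with a block boundary, or the active site is g with the string not aligned with a block boundary. -/
open LSym

/-- The location-independent forbidden adjacent pairs, penalty groups 1, 3, 4,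
5 and 6 (applying both with and without a block boundary between the two
sites):  group 1: `u` followed by a non-`u`, a non-`d` followed by `d`;
group 3: `1` followed by anything other than `1` or `u`, anything other than
`2` or `d` followed by `2`; group 4: `d1`, `2u`, `du`; group 5: `21`;
group 6: two adjacent active sites. -/
def ViolPair (x y : LSym) : Prop :=
  (x = unborn ∧ y ≠ unborn) ∨ (y = dead ∧ x ≠ dead) ∨
  (x = q1 ∧ y ≠ q1 ∧ y ≠ unborn) ∨ (y = q2 ∧ x ≠ q2 ∧ x ≠ dead) ∨
  (x = dead ∧ y = q1) ∨ (x = q2 ∧ y = unborn) ∨ (x = dead ∧ y = unborn) ∨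
  (x = q2 ∧ y = q1) ∨
  (isActive x = true ∧ isActive y = true)

/-- A configuration violates one of the local penalty rules in groups 1–6:
either some adjacent pair is forbidden, or (group 2) there is an `unborn` in
the first block, a `dead` in the last block, a `1` at the left end of the
chain, or a `2` at the right end of the chain. -/
def Violates16 (n R : ℕ) (c : ℕ → LSym) : Prop :=
  (∃ i, i + 1 < n * R ∧ ViolPair (c i) (c (i + 1))) ∨
  (∃ i, i < n ∧ c i = unborn) ∨
  (∃ i, n * (R - 1) ≤ i ∧ i < n * R ∧ c i = dead) ∨
  c 0 = q1 ∨ c (n * R - 1) = q2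


section Helpers
open LSym

lemma back_q1u {x y : LSym} (h : ¬ ViolPair x y) (hy : y = q1 ∨ y = unborn) :
    x = q1 ∨ x = unborn ∨ isActive x = true := by
  cases x <;> rcases hy with rfl | rfl <;> simp_all [ViolPair, isActive]

lemma fwd_act_q1 {x y : LSym} (h : ¬ ViolPair x y) (hx : x = q1 ∨ isActive x = true) :
    y = q1 ∨ y = unborn := by
  cases y <;> cases x <;> simp_all [ViolPair, isActive]

lemma fwd_unborn {y : LSym} (h : ¬ ViolPair unborn y) : y = unborn := by
  cases y <;> simp_all [ViolPair, isActive]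

lemma back_active {x y : LSym} (h : ¬ ViolPair x y) (hy : isActive y = true) :
    x = q2 ∨ x = dead := by
  cases x <;> cases y <;> simp_all [ViolPair, isActive]

lemma back_q2 {x : LSym} (h : ¬ ViolPair x q2) : x = q2 ∨ x = dead := by
  cases x <;> simp_all [ViolPair, isActive]

lemma back_dead {x : LSym} (h : ¬ ViolPair x dead) : x = dead := by
  cases x <;> simp_all [ViolPair, isActive]

lemma active_cases {s : LSym} (h : isActive s = true) :
    s = gate ∨ s = rflag ∨ s = lflag ∨ s = turn := by
  cases s <;> simp_all [isActive]

end Helpers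

/-- Any configuration violating none of the local penalty rules in groups 1–6
is either a legal configuration or has the overall shape of one but belongs to
one of three exceptional families: (i) a `2⋯2 t 1⋯1` string with the turning
flag strictly in the interior; (ii) a qubit string of incorrect length
(different from `n` for active site `g` or `r`, or from `n+1` for `l` or `t`);
(iii) a qubit string of length `n` with active site `r` aligned with a block
boundary, or with active site `g` not aligned with a block boundary. -/

theorem locally_unpenalized_configurations (n R : ℕ) (hn : 2 ≤ n) (hR : 2 ≤ R)
    (c : ℕ → LSym) (h : ¬ Violates16 n R c) :
    Legal n R c ∨
    ∃ a p b, Shape n R c a p b ∧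
      ((c p = turn ∧ a < p ∧ p + 1 < b) ∨
       (((c p = gate ∨ c p = rflag) ∧ b ≠ a + n) ∨
        ((c p = lflag ∨ c p = turn) ∧ b ≠ a + n + 1)) ∨
       (b = a + n ∧ ((c p = rflag ∧ a % n = 0) ∨ (c p = gate ∧ a % n ≠ 0)))) := by

  have hLmul : n * (R - 1) + n = n * R := by
    have h1 : R - 1 + 1 = R := by omega
    calc n * (R - 1) + n = n * (R - 1 + 1) := (Nat.mul_succ n (R - 1)).symm
      _ = n * R := by rw [h1]
  have hL4 : 4 ≤ n * R := by
    calc 4 = 2 * 2 := rfl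
      _ ≤ n * R := Nat.mul_le_mul hn hR
  have hpair : ∀ i, i + 1 < n * R → ¬ ViolPair (c i) (c (i + 1)) :=
    fun i hi hv => h (Or.inl ⟨i, hi, hv⟩)
  have hub : ∀ i, i < n → c i ≠ unborn :=
    fun i hi hc => h (Or.inr (Or.inl ⟨i, hi, hc⟩))
  have hdd : ∀ i, n * (R - 1) ≤ i → i < n * R → c i ≠ dead :=
    fun i h1 h2 hc => h (Or.inr (Or.inr (Or.inl ⟨i, h1, h2, hc⟩)))
  have h0 : c 0 ≠ q1 := fun hc => h (Or.inr (Or.inr (Or.inr (Or.inl hc))))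
  have hendq2 : c (n * R - 1) ≠ q2 :=
    fun hc => h (Or.inr (Or.inr (Or.inr (Or.inr hc))))
  -- existence of an active site
  have key : ∀ i, i < n * R → (c i = q1 ∨ c i = unborn) →
      ∃ j, j < n * R ∧ isActive (c j) = true := by
    intro i
    induction i with
    | zero =>
      intro _ hc
      rcases hc with hc | hc
      · exact absurd hc h0
      · exact absurd hc (hub 0 (by omega))
    | succ k ih =>
      intro hk hc
      have hnv := hpair k hk
      rcases back_q1u hnv hc with h1 | h1 | h1
      · exact ih (by omega) (Or.inl h1)
      · exact ih (by omega) (Or.inr h1)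
      · exact ⟨k, by omega, h1⟩
  have hex : ∃ j, j < n * R ∧ isActive (c j) = true := by
    have hlast : n * R - 1 < n * R := by omega
    cases hc : c (n * R - 1) with
    | q1 => exact key _ hlast (Or.inl hc)
    | q2 => exact absurd hc hendq2
    | unborn => exact key _ hlast (Or.inr hc)
    | dead => exact absurd hc (hdd _ (by omega) hlast)
    | gate => exact ⟨_, hlast, by rw [hc]; rfl⟩
    | rflag => exact ⟨_, hlast, by rw [hc]; rfl⟩
    | lflag => exact ⟨_, hlast, by rw [hc]; rfl⟩
    | turn => exact ⟨_, hlast, by rw [hc]; rfl⟩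
  obtain ⟨p, hpL, hp⟩ := hex
  -- the start of the qubit string
  have haex : ∃ i, c i ≠ dead := by
    refine ⟨p, fun hc => ?_⟩
    rw [hc] at hp; exact absurd hp (by simp [isActive])
  set a := Nat.find haex with ha_def
  have ha : c a ≠ dead := Nat.find_spec haex
  have hadead : ∀ i, i < a → c i = dead := fun i hi =>
    not_not.mp (Nat.find_min haex hi)
  have hap : a ≤ p := Nat.find_min' haex (by
    intro hc; rw [hc] at hp; exact absurd hp (by simp [isActive]))
  -- dead propagates backwards
  have deadprop : ∀ k i, i + k < n * R → c (i + k) = dead → c i = dead := by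
    intro k
    induction k with
    | zero => intro i _ hc; simpa using hc
    | succ m ih =>
      intro i hlt hc
      have hnv := hpair (i + m) (by omega)
      have hc' : c (i + m + 1) = dead := hc
      rw [hc'] at hnv
      exact ih i (by omega) (back_dead hnv)
  -- sites before p are q2 or dead
  have seg : ∀ k i, p - i = k → i < p → c i = q2 ∨ c i = dead := by
    intro k
    induction k with
    | zero => intro i h1 h2; omega
    | succ m ih =>
      intro i h1 h2
      have hnv := hpair i (by omega)
      by_cases hip : i + 1 = p
      · have hact : isActive (c (i + 1)) = true := by rw [hip]; exact hp
        exact back_active hnv hact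
      · rcases ih (i + 1) (by omega) (by omega) with h3 | h3
        · rw [h3] at hnv; exact back_q2 hnv
        · rw [h3] at hnv; exact Or.inr (back_dead hnv)
  have hq2 : ∀ i, a ≤ i → i < p → c i = q2 := by
    intro i h1 h2
    rcases seg (p - i) i rfl h2 with h3 | h3
    · exact h3
    · exfalso
      exact ha (deadprop (i - a) a (by omega)
        (by rw [show a + (i - a) = i from by omega]; exact h3))
  -- the end of the qubit string
  have hQex : ∃ i, i = n * R ∨ (p < i ∧ c i = unborn) := ⟨n * R, Or.inl rfl⟩
  set b := Nat.find hQex with hb_def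
  have hbQ := Nat.find_spec hQex
  have hbL : b ≤ n * R := Nat.find_min' hQex (Or.inl rfl)
  have hpb : p < b := by
    rcases hbQ with h3 | h3 <;> omega
  have hq1 : ∀ i, p < i → i < b → c i = q1 := by
    have main : ∀ k, p + 1 + k < b → c (p + 1 + k) = q1 := by
      intro k
      induction k with
      | zero =>
        intro hk
        have hnv := hpair p (by omega)
        rcases fwd_act_q1 hnv (Or.inr hp) with h3 | h3
        · exact h3
        · exfalso
          have : b ≤ p + 1 := Nat.find_min' hQex (Or.inr ⟨by omega, h3⟩)
          omega
      | succ m ih =>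
        intro hk
        have hprev := ih (by omega)
        have hnv := hpair (p + 1 + m) (by omega)
        rw [hprev] at hnv
        rcases fwd_act_q1 hnv (Or.inl rfl) with h3 | h3
        · exact h3
        · exfalso
          have : b ≤ p + 1 + m + 1 := Nat.find_min' hQex (Or.inr ⟨by omega, h3⟩)
          omega
    intro i h1 h2
    have := main (i - (p + 1)) (by omega)
    rwa [show p + 1 + (i - (p + 1)) = i from by omega] at this
  have hunb : ∀ i, b ≤ i → i < n * R → c i = unborn := by
    have hbu : b < n * R → c b = unborn := by
      intro hbb
      rcases hbQ with h3 | h3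
      · omega
      · exact h3.2
    have main : ∀ k, b + k < n * R → c (b + k) = unborn := by
      intro k
      induction k with
      | zero => intro hk; simpa using hbu (by omega)
      | succ m ih =>
        intro hk
        have hprev := ih (by omega)
        have hnv := hpair (b + m) (by omega)
        rw [hprev] at hnv
        exact fwd_unborn hnv
    intro i h1 h2
    have := main (i - b) (by omega)
    rwa [show b + (i - b) = i from by omega] at this
  have hshape : Shape n R c a p b := ⟨hap, hpb, hbL, hadead, hq2, hp, hq1, hunb⟩
  -- classification
  rcases active_cases hp with hcp | hcp | hcp | hcp
  · by_cases hbn : b = a + n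
    · by_cases han : a % n = 0
      · exact Or.inl ⟨a, p, b, hshape, Or.inl ⟨hcp, hbn, han⟩⟩
      · exact Or.inr ⟨a, p, b, hshape,
          Or.inr (Or.inr ⟨hbn, Or.inr ⟨hcp, han⟩⟩)⟩
    · exact Or.inr ⟨a, p, b, hshape,
        Or.inr (Or.inl (Or.inl ⟨Or.inl hcp, hbn⟩))⟩
  · by_cases hbn : b = a + n
    · by_cases han : a % n = 0
      · exact Or.inr ⟨a, p, b, hshape,
          Or.inr (Or.inr ⟨hbn, Or.inl ⟨hcp, han⟩⟩)⟩
      · exact Or.inl ⟨a, p, b, hshape, Or.inr (Or.inl ⟨hcp, hbn, han⟩)⟩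
    · exact Or.inr ⟨a, p, b, hshape,
        Or.inr (Or.inl (Or.inl ⟨Or.inr hcp, hbn⟩))⟩
  · by_cases hbn : b = a + n + 1
    · exact Or.inl ⟨a, p, b, hshape, Or.inr (Or.inr (Or.inl ⟨hcp, hbn⟩))⟩
    · exact Or.inr ⟨a, p, b, hshape,
        Or.inr (Or.inl (Or.inr ⟨Or.inl hcp, hbn⟩))⟩
  · by_cases hbn : b = a + n + 1
    · by_cases hturn : p = a ∨ p + 1 = b
      · exact Or.inl ⟨a, p, b, hshape, Or.inr (Or.inr (Or.inr ⟨hcp, hbn, hturn⟩))⟩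
      · push_neg at hturn
        exact Or.inr ⟨a, p, b, hshape,
          Or.inl ⟨hcp, by omega, by omega⟩⟩
    · exact Or.inr ⟨a, p, b, hshape,
        Or.inr (Or.inl (Or.inr ⟨Or.inr hcp, hbn⟩))⟩
end

section
/- In the 12-state construction, the number of qubit-type sites (states 1, 2, g, r) and the number of active sites (states g, r, l, t) are each invariant under every transition rule. Hence every minimal set of configurations closed under the transition rules consists of configurations with the same qubit count and the same active-site count. -/
open LSym

/-- Qubit-type sites: the qubit subspaces `1`, `2` and the qubit-carrying
active states `g`, `r`. -/
def isQubit : LSym → Bool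
  | q1 => true
  | q2 => true
  | gate => true
  | rflag => true
  | _ => false

/-- Number of qubit-type sites of a configuration on a line of `L` sites. -/
def qubitCount (L : ℕ) (c : ℕ → LSym) : ℕ :=
  ((Finset.range L).filter fun i => isQubit (c i) = true).card

instance inst_s11 : Fintype LSym :=
  ⟨{q1, q2, unborn, dead, gate, rflag, lflag, turn}, by intro x; cases x <;> simp⟩

lemma sum_two {L i : ℕ} (hi : i + 1 < L) (g g' : ℕ → ℕ)
    (hoff : ∀ j, j ≠ i → j ≠ i + 1 → g' j = g j)
    (hp : g' i + g' (i + 1) = g i + g (i + 1)) :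
    ∑ j ∈ Finset.range L, g' j = ∑ j ∈ Finset.range L, g j := by
  have hiL : i ∈ Finset.range L := by simp; omega
  have hi1 : i + 1 ∈ (Finset.range L).erase i := by simp; omega
  have key : ∀ h : ℕ → ℕ, ∑ j ∈ Finset.range L, h j =
      h i + (h (i + 1) + ∑ j ∈ ((Finset.range L).erase i).erase (i + 1), h j) := by
    intro h
    rw [← Finset.add_sum_erase _ h hiL, ← Finset.add_sum_erase _ h hi1]
  rw [key g, key g']
  have hs : ∑ j ∈ ((Finset.range L).erase i).erase (i + 1), g' j =
      ∑ j ∈ ((Finset.range L).erase i).erase (i + 1), g j := by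
    refine Finset.sum_congr rfl fun j hj => ?_
    simp only [Finset.mem_erase] at hj
    exact hoff j hj.2.1 hj.1
  omega

lemma count_invariant_of (f : LSym → Bool) (hf : f turn = f lflag)
    (hpair : ∀ (b : Bool) (x y x' y' : LSym), fwdPair b x y = some (x', y') →
      ((f x').toNat + (f y').toNat = (f x).toNat + (f y).toNat))
    {n R : ℕ} (hn : 1 ≤ n) (hR : 1 ≤ R) {c c' : ℕ → LSym} (h : Step n R c c') :
    ((Finset.range (n * R)).filter fun i => f (c' i) = true).card =
      ((Finset.range (n * R)).filter fun i => f (c i) = true).card := by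
  have hL : 1 ≤ n * R := Nat.one_le_iff_ne_zero.mpr (by positivity)
  have card_eq : ∀ d : ℕ → LSym,
      ((Finset.range (n * R)).filter fun i => f (d i) = true).card =
        ∑ j ∈ Finset.range (n * R), (f (d j)).toNat := by
    intro d
    rw [Finset.card_filter]
    refine Finset.sum_congr rfl fun j _ => ?_
    by_cases hb : f (d j) = true <;> simp [hb]
  rw [card_eq, card_eq]
  rcases h with ⟨i, hi, hrule, hoff⟩ | ⟨h1, h2, hoff⟩ | ⟨h1, h2, hoff⟩
  · exact sum_two hi _ _ (fun j hj hj' => by rw [hoff j hj hj'])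
      (hpair _ _ _ _ _ hrule)
  · refine Finset.sum_congr rfl fun j _ => ?_
    by_cases hj : j = n * R - 1
    · subst hj; rw [h1, h2, hf]
    · rw [hoff j hj]
  · refine Finset.sum_congr rfl fun j _ => ?_
    by_cases hj : j = 0
    · subst hj; rw [h1, h2, hf]
    · rw [hoff j hj]

/-- The number of qubit-type sites and the number of active sites are each
invariant under every transition rule; hence any two configurations in the same
minimal transition-closed set (i.e. related by the symmetric-transitive closure
of the transition relation) have the same qubit count and the same active-site
count. -/
theorem counts_invariant (n R : ℕ) (hn : 1 ≤ n) (hR : 1 ≤ R) :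
    (∀ c c' : ℕ → LSym, Step n R c c' →
      qubitCount (n * R) c' = qubitCount (n * R) c ∧
      activeCount (n * R) c' = activeCount (n * R) c) ∧
    (∀ c c' : ℕ → LSym, Relation.EqvGen (Step n R) c c' →
      qubitCount (n * R) c' = qubitCount (n * R) c ∧
      activeCount (n * R) c' = activeCount (n * R) c) := by
  have hq : ∀ (b : Bool) (x y x' y' : LSym), fwdPair b x y = some (x', y') →
      ((isQubit x').toNat + (isQubit y').toNat = (isQubit x).toNat + (isQubit y).toNat) := by
    decide
  have ha : ∀ (b : Bool) (x y x' y' : LSym), fwdPair b x y = some (x', y') →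
      ((isActive x').toNat + (isActive y').toNat = (isActive x).toNat + (isActive y).toNat) := by
    decide
  have step : ∀ c c' : ℕ → LSym, Step n R c c' →
      qubitCount (n * R) c' = qubitCount (n * R) c ∧
      activeCount (n * R) c' = activeCount (n * R) c := by
    intro c c' h
    exact ⟨count_invariant_of isQubit rfl hq hn hR h,
      count_invariant_of isActive rfl ha hn hR h⟩
  refine ⟨step, fun c c' h => ?_⟩
  induction h with
  | rel x y hxy => exact step x y hxy
  | refl x => exact ⟨rfl, rfl⟩
  | symm x y _ ih => exact ⟨ih.1.symm, ih.2.symm⟩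
  | trans x y z _ _ ih1 ih2 => exact ⟨ih2.1.trans ih1.1, ih2.2.trans ih1.2⟩
end

section
/- Let H_prop and H_penalty be nonnegative operators on a subspace K_S spanned by the configurations of a minimal transition-closed set S of size m, where H_prop restricted to K_S is the path Laplacian on the m configurations (so its smallest nonzero eigenvalue is at least c/m² for a universal constant c) and H_penalty is diagonal, equal to the projector onto the span of the configurations violating a local penalty. If at least a fraction ε of the configurations in S violate a penalty, then every state in K_S has energy at least (c/m²)·(ε/2) with respect to H_prop + H_penalty; in particular, if ε = Ω(1/m) then the minimum eigenvalue of (H_prop + H_penalty)|_{K_S} is Ω(1/m³). -/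
open Matrix
open Finset

/-- The path Laplacian on `m` vertices: the `m×m` symmetric tridiagonal matrix
with diagonal `(1/2, 1, …, 1, 1/2)` and off-diagonal entries `−1/2` (the
propagation Hamiltonian restricted to the span of the `m` configurations of a
minimal transition-closed set). -/
noncomputable def pathLap (m : ℕ) : Matrix (Fin m) (Fin m) ℝ :=
  Matrix.of fun i j =>
    if i = j then (if i.val = 0 ∨ i.val + 1 = m then 1 / 2 else 1)
    else if i.val + 1 = j.val ∨ j.val + 1 = i.val then -(1 / 2) else 0

instance (m : ℕ) : DecidableRel (SimpleGraph.pathGraph m).Adj :=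
  fun _ _ => decidable_of_iff _ SimpleGraph.pathGraph_adj.symm

lemma degree_pathGraph (m : ℕ) (i : Fin m) :
    ((SimpleGraph.pathGraph m).degree i : ℝ) =
      (if i.val + 1 < m then 1 else 0) + (if 0 < i.val then 1 else 0) := by
  rw [SimpleGraph.degree_eq_sum_if_adj]
  simp_rw [SimpleGraph.pathGraph_adj]
  rw [Fin.sum_univ_eq_sum_range (fun n => if ((i:ℕ) + 1 = n ∨ n + 1 = (i:ℕ)) then (1:ℝ) else 0) m]
  have hsplit : ∀ n : ℕ, (if ((i:ℕ) + 1 = n ∨ n + 1 = (i:ℕ)) then (1:ℝ) else 0)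
      = (if (i:ℕ) + 1 = n then (1:ℝ) else 0) + (if n + 1 = (i:ℕ) then (1:ℝ) else 0) := by
    intro n
    split_ifs <;> norm_num <;> omega
  simp_rw [hsplit, Finset.sum_add_distrib]
  congr 1
  · rw [Finset.sum_ite_eq (range m) ((i:ℕ)+1) (fun _ => (1:ℝ))]
    simp [Finset.mem_range]
  · rcases h : (i : ℕ) with _ | k
    · simp
    · have hk : k ∈ range m := by
        have := i.isLt; rw [Finset.mem_range]; omega
      simp_rw [Nat.succ_inj]
      rw [Finset.sum_ite_eq' (range m) k (fun _ => (1:ℝ))]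
      simp [hk]

lemma pathLap_eq (m : ℕ) (hm : 2 ≤ m) :
    pathLap m = (2⁻¹ : ℝ) • (SimpleGraph.pathGraph m).lapMatrix ℝ := by
  ext i j
  rw [SimpleGraph.lapMatrix]
  by_cases hij : i = j
  · subst hij
    simp only [pathLap, Matrix.of_apply, if_pos rfl, Matrix.smul_apply, Matrix.sub_apply,
      SimpleGraph.degMatrix, Matrix.diagonal_apply_eq, SimpleGraph.adjMatrix_apply,
      SimpleGraph.irrefl, if_false, smul_eq_mul]
    rw [sub_zero, degree_pathGraph]
    have him := i.isLt
    split_ifs <;> norm_num <;> omega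
  · have hval : (i : ℕ) ≠ (j : ℕ) := fun h => hij (Fin.ext h)
    simp only [pathLap, Matrix.of_apply, if_neg hij, Matrix.smul_apply, Matrix.sub_apply,
      SimpleGraph.degMatrix, Matrix.diagonal_apply_ne _ hij, SimpleGraph.adjMatrix_apply,
      SimpleGraph.pathGraph_adj, smul_eq_mul]
    rw [zero_sub]
    split_ifs <;> norm_num

lemma pathLap_quad_ge (m : ℕ) (hm : 1 ≤ m) (x : Fin m → ℝ) :
    (∑ i : Fin m, ∑ j : Fin m,
        if (SimpleGraph.pathGraph m).Adj i j then (x i - x j)^2 else 0) / 4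
      ≤ x ⬝ᵥ (pathLap m).mulVec x := by
  rcases eq_or_lt_of_le hm with h1 | h2
  · -- m = 1
    subst h1
    have hS : (∑ i : Fin 1, ∑ j : Fin 1,
        if (SimpleGraph.pathGraph 1).Adj i j then (x i - x j)^2 else 0) = 0 := by
      simp
    rw [hS]
    have : x ⬝ᵥ (pathLap 1).mulVec x = x 0 * (1/2 * x 0) := by
      simp [dotProduct, Matrix.mulVec, pathLap, Fin.sum_univ_one]
    rw [this]
    nlinarith [sq_nonneg (x 0)]
  · have hm2 : 2 ≤ m := h2
    rw [pathLap_eq m hm2, Matrix.smul_mulVec, dotProduct_smul,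
      ← Matrix.toLinearMap₂'_apply', SimpleGraph.lapMatrix_toLinearMap₂']
    rw [smul_eq_mul]
    apply le_of_eq
    ring

/-- There is a universal constant `c > 0` (so that the smallest nonzero
eigenvalue of the path Laplacian on `m` vertices is at least `c/m²`) such that,
whenever the penalty Hamiltonian is the diagonal projector onto a set `V` of
violating configurations comprising at least a fraction `ε` of all `m`
configurations, every state has energy at least `(c/m²)·(ε/2)` with respect to
`H_prop + H_penalty`; in particular for `ε = Ω(1/m)` the minimum eigenvalue is
`Ω(1/m³)`. -/
theorem clairvoyance_energy_bound :
    ∃ c : ℝ, 0 < c ∧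
      ∀ m : ℕ, 1 ≤ m → ∀ V : Finset (Fin m), ∀ ε : ℝ, 0 < ε →
        ε * m ≤ V.card →
        ∀ x : Fin m → ℝ,
          c / (m : ℝ) ^ 2 * (ε / 2) * (x ⬝ᵥ x) ≤
            x ⬝ᵥ ((pathLap m +
              Matrix.diagonal (fun i => if i ∈ V then (1 : ℝ) else 0)).mulVec x) := by
  refine ⟨1/4, by norm_num, ?_⟩
  intro m hm V ε hε hcard x
  set M : ℝ := (m : ℝ) with hMdef
  have hM1 : (1:ℝ) ≤ M := by rw [hMdef]; exact_mod_cast hm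
  have hM0 : (0:ℝ) < M := by linarith
  -- V is nonempty
  have hVpos : 0 < V.card := by
    have h0 : (0:ℝ) < ε * m := by positivity
    have : (0:ℝ) < (V.card : ℝ) := lt_of_lt_of_le h0 hcard
    exact_mod_cast this
  obtain ⟨j, hj⟩ := Finset.card_pos.mp hVpos
  have hε1 : ε ≤ 1 := by
    have hcle : (V.card : ℝ) ≤ M := by
      have := Finset.card_le_univ V
      have h2 : V.card ≤ m := by simpa using this
      rw [hMdef]; exact_mod_cast h2
    nlinarith
  -- extended vector
  set g : ℕ → ℝ := fun n => if h : n < m then x ⟨n, h⟩ else 0 with hgdef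
  have hg : ∀ i : Fin m, g i = x i := fun i => dif_pos i.isLt
  set Dr : ℝ := ∑ k ∈ range (m-1), (g (k+1) - g k)^2 with hDrdef
  have hDr0 : 0 ≤ Dr := Finset.sum_nonneg fun _ _ => sq_nonneg _
  set S : ℝ := ∑ i : Fin m, ∑ j : Fin m,
      if (SimpleGraph.pathGraph m).Adj i j then (x i - x j)^2 else 0 with hSdef
  have hnn : ∀ (a b : Fin m),
      0 ≤ (if (SimpleGraph.pathGraph m).Adj a b then (x a - x b)^2 else 0) := by
    intro a b; split_ifs; exacts [sq_nonneg _, le_refl _]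
  -- Step B : Dr ≤ S
  have hDrS : Dr ≤ S := by
    have h1 : Dr = ∑ k ∈ range m, (if k+1 < m then (g (k+1) - g k)^2 else 0) := by
      rw [eq_comm]
      rw [← Finset.sum_subset (Finset.range_subset_range.mpr (Nat.sub_le m 1))]
      · exact Finset.sum_congr rfl fun k hk => if_pos (by rw [Finset.mem_range] at hk; omega)
      · intro k hk hk2
        rw [Finset.mem_range] at hk hk2
        rw [if_neg (by omega : ¬ (k + 1 < m))]
    have h2 : ∑ k ∈ range m, (if k+1 < m then (g (k+1) - g k)^2 else 0)
        = ∑ i : Fin m, (if (i:ℕ)+1 < m then (g ((i:ℕ)+1) - g (i:ℕ))^2 else 0) :=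
      (Fin.sum_univ_eq_sum_range (fun n => if n+1 < m then (g (n+1) - g n)^2 else 0) m).symm
    rw [h1, h2]
    apply Finset.sum_le_sum
    intro i _
    by_cases h : (i:ℕ)+1 < m
    · rw [if_pos h]
      have hadj : (SimpleGraph.pathGraph m).Adj i ⟨(i:ℕ)+1, h⟩ :=
        SimpleGraph.pathGraph_adj.mpr (Or.inl rfl)
      have hterm : (g ((i:ℕ)+1) - g (i:ℕ))^2
          = (if (SimpleGraph.pathGraph m).Adj i ⟨(i:ℕ)+1, h⟩
              then (x i - x ⟨(i:ℕ)+1, h⟩)^2 else 0) := by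
        rw [if_pos hadj, hg i, show g ((i:ℕ)+1) = x ⟨(i:ℕ)+1, h⟩ from dif_pos h]
        ring
      rw [hterm]
      exact Finset.single_le_sum (fun b _ => hnn i b) (Finset.mem_univ _)
    · rw [if_neg h]
      exact Finset.sum_nonneg fun b _ => hnn i b
  -- Step C : Poincaré
  have key : ∀ a b : ℕ, a ≤ b → b < m → (g b - g a)^2 ≤ (M - 1) * Dr := by
    intro a b hab hbm
    have htel : g b - g a = ∑ k ∈ Finset.Ico a b, (g (k+1) - g k) := by
      rw [Finset.sum_Ico_eq_sub _ hab, Finset.sum_range_sub g, Finset.sum_range_sub g]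
      ring
    have hcs : (g b - g a)^2 ≤ (Finset.Ico a b).card * ∑ k ∈ Finset.Ico a b, (g (k+1) - g k)^2 := by
      rw [htel]; exact sq_sum_le_card_mul_sum_sq
    have hcard2 : ((Finset.Ico a b).card : ℝ) ≤ M - 1 := by
      rw [Nat.card_Ico]
      have h3 : b - a ≤ m - 1 := by omega
      have h4 : ((b - a : ℕ) : ℝ) ≤ ((m - 1 : ℕ) : ℝ) := by exact_mod_cast h3
      have h5 : ((m - 1 : ℕ) : ℝ) = M - 1 := by
        rw [Nat.cast_sub hm]; simp [hMdef]
      linarith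
    have hsub : ∑ k ∈ Finset.Ico a b, (g (k+1) - g k)^2 ≤ Dr := by
      apply Finset.sum_le_sum_of_subset_of_nonneg
      · intro k hk
        rw [Finset.mem_Ico] at hk; rw [Finset.mem_range]; omega
      · intro _ _ _; exact sq_nonneg _
    calc (g b - g a)^2 ≤ (Finset.Ico a b).card * ∑ k ∈ Finset.Ico a b, (g (k+1) - g k)^2 := hcs
      _ ≤ (M - 1) * Dr := by
          apply mul_le_mul hcard2 hsub (Finset.sum_nonneg fun _ _ => sq_nonneg _) (by linarith)
  have hpo : ∀ a b : Fin m, (x a - x b)^2 ≤ (M - 1) * Dr := by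
    intro a b
    rw [← hg a, ← hg b]
    rcases le_total (b:ℕ) (a:ℕ) with h | h
    · exact key b a h a.isLt
    · have := key a b h b.isLt
      nlinarith [this]
  -- pointwise bound and sum
  set T : ℝ := ∑ i : Fin m, x i ^ 2 with hTdef
  have hT0 : 0 ≤ T := Finset.sum_nonneg fun _ _ => sq_nonneg _
  have hxx : x ⬝ᵥ x = T := by
    simp [dotProduct, hTdef, sq]
  have hsumT : T ≤ 2*M*(x j^2) + 2*M*((M-1)*Dr) := by
    have hpt : ∀ i : Fin m, x i ^2 ≤ 2 * x j ^2 + 2 * ((M-1)*Dr) := by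
      intro i
      have h1 := hpo i j
      nlinarith [sq_nonneg (x i - 2 * x j)]
    calc T ≤ ∑ _i : Fin m, (2 * x j ^2 + 2 * ((M-1)*Dr)) :=
          Finset.sum_le_sum fun i _ => hpt i
      _ = M * (2 * x j ^2 + 2 * ((M-1)*Dr)) := by
          rw [Finset.sum_const, Finset.card_univ, Fintype.card_fin, nsmul_eq_mul]
      _ = 2*M*(x j^2) + 2*M*((M-1)*Dr) := by ring
  -- energy decomposition
  rw [Matrix.add_mulVec, dotProduct_add]
  have hQp : Dr / 4 ≤ x ⬝ᵥ (pathLap m).mulVec x := by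
    have := pathLap_quad_ge m hm x
    rw [← hSdef] at this
    linarith
  have hQpen : x j ^2 ≤ x ⬝ᵥ (Matrix.diagonal (fun i => if i ∈ V then (1:ℝ) else 0)).mulVec x := by
    have heq : x ⬝ᵥ (Matrix.diagonal (fun i => if i ∈ V then (1:ℝ) else 0)).mulVec x
        = ∑ i : Fin m, (if i ∈ V then x i ^2 else 0) := by
      unfold dotProduct
      apply Finset.sum_congr rfl
      intro i _
      rw [Matrix.mulVec_diagonal]
      split_ifs <;> ring
    rw [heq]
    have : (if j ∈ V then x j ^2 else 0) = x j ^2 := if_pos hj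
    rw [← this]
    exact Finset.single_le_sum (f := fun i => if i ∈ V then x i ^2 else 0)
      (fun b _ => by
        show (0:ℝ) ≤ if b ∈ V then x b ^2 else 0
        split_ifs; exacts [sq_nonneg _, le_refl _]) (Finset.mem_univ j)
  rw [hxx]
  have hgoal : (1:ℝ)/4 / M^2 * (ε/2) * T = ε * T / (8 * M^2) := by ring
  rw [hgoal, div_le_iff₀ (by positivity : (0:ℝ) < 8 * M^2)]
  have h1 : ε * T ≤ T := by nlinarith
  set Q : ℝ := x ⬝ᵥ (pathLap m).mulVec x + x ⬝ᵥ (Matrix.diagonal (fun i => if i ∈ V then (1:ℝ) else 0)).mulVec x with hQdef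
  have hQ : x j ^2 + Dr/4 ≤ Q := by rw [hQdef]; linarith
  have h2 : T ≤ Q * (8 * M^2) := by
    nlinarith [mul_le_mul_of_nonneg_left hQ (show (0:ℝ) ≤ 8 * M^2 by positivity),
      mul_nonneg (mul_nonneg hM0.le hM0.le) (sq_nonneg (x j)),
      mul_nonneg hM0.le hDr0, mul_nonneg hM0.le (sq_nonneg (x j)),
      mul_nonneg (mul_nonneg hM0.le hM0.le) hDr0]
  linarith
end
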